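/- arXiv:2301.07404 — 8 statements merged into one kernel-verified Lean document; each statement's English description precedes it below -/
import Mathlib

section
/- Let X be an r-ample simplicial complex and let σ be a k-dimensional simplex of X (i.e., |σ| = k+1) with k + 1 < r. Then the link Lk_X(σ) of σ in X is an (r−k−1)-ample simplicial complex. -/
/-- An abstract simplicial complex on vertex type `V`: a collection of nonempty
finite subsets (simplexes) closed under passing to nonempty subsets.  The vertex
set is the set of `v` with `{v}` a simplex. -/
structure SComplex (V : Type*) where
  faces : Set (Finset V)
  nonempty_of_mem : ∀ ⦃σ : Finset V⦄, σ ∈ faces → σ.Nonempty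
  down_closed : ∀ ⦃σ : Finset V⦄, σ ∈ faces → ∀ ⦃τ : Finset V⦄, τ ⊆ σ → τ.Nonempty → τ ∈ faces

namespace SComplex

variable {V W : Type*}

/-- The vertex set of a simplicial complex. -/
def verts (X : SComplex V) : Set V := {v | {v} ∈ X.faces}

/-- The set of faces of the induced subcomplex `X_U`. -/
def induced (X : SComplex V) (U : Set V) : Set (Finset V) :=
  {σ | σ ∈ X.faces ∧ (σ : Set V) ⊆ U}

/-- The induced subcomplex `X_U`, as a simplicial complex. -/
def inducedSub (X : SComplex V) (U : Set V) : SComplex V where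
  faces := X.induced U
  nonempty_of_mem := fun _ h => X.nonempty_of_mem h.1
  down_closed := fun _ h _ hτ hne =>
    ⟨X.down_closed h.1 hτ hne, Set.Subset.trans (Finset.coe_subset.mpr hτ) h.2⟩

/-- The link of a vertex `v`: simplexes `σ` with `v ∉ σ` and `σ ∪ {v} ∈ X`. -/
def link [DecidableEq V] (X : SComplex V) (v : V) : Set (Finset V) :=
  {σ | σ ∈ X.faces ∧ v ∉ σ ∧ insert v σ ∈ X.faces}

/-- The link of a simplex `σ`: simplexes `τ` with `τ ∩ σ = ∅` and `τ ∪ σ ∈ X`. -/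
def linkSimplex [DecidableEq V] (X : SComplex V) (σ : Finset V) : SComplex V where
  faces := {τ | τ ∈ X.faces ∧ Disjoint τ σ ∧ τ ∪ σ ∈ X.faces}
  nonempty_of_mem := fun _ h => X.nonempty_of_mem h.1
  down_closed := by
    intro τ hτ ρ hρ hne
    refine ⟨X.down_closed hτ.1 hρ hne, Finset.disjoint_of_subset_left hρ hτ.2.1, ?_⟩
    exact X.down_closed hτ.2.2 (Finset.union_subset_union_left hρ)
      (hne.mono Finset.subset_union_left)

/-- A downward closed family of finite sets (a subcomplex, when contained in a complex). -/
def DownClosed (A : Set (Finset V)) : Prop :=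
  ∀ ⦃σ : Finset V⦄, σ ∈ A → ∀ ⦃τ : Finset V⦄, τ ⊆ σ → τ.Nonempty → τ ∈ A

/-- `X` is `r`-ample: `X` is nonempty and for every `U ⊆ V(X)` with `|U| ≤ r` and every
subcomplex `A ⊆ X_U` there is a vertex `v ∈ V(X) \ U` with `Lk_X(v) ∩ X_U = A`. -/
def Ample [DecidableEq V] (X : SComplex V) (r : ℕ) : Prop :=
  X.faces.Nonempty ∧
  ∀ U : Finset V, (U : Set V) ⊆ X.verts → U.card ≤ r →
    ∀ A : Set (Finset V), A ⊆ X.induced (U : Set V) → DownClosed A →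
      ∃ v ∈ X.verts, v ∉ U ∧ X.link v ∩ X.induced (U : Set V) = A

/-- An embedding of `A` into `X`: an isomorphism of `A` onto an induced subcomplex of `X`,
recorded as a vertex map injective on `V(A)` such that a set of vertexes of `A` is a
simplex of `A` iff its image is a simplex of `X`. -/
def IsEmbedding [DecidableEq V] (f : W → V) (A : SComplex W) (X : SComplex V) : Prop :=
  Set.InjOn f A.verts ∧
  ∀ σ : Finset W, (σ : Set W) ⊆ A.verts → (σ ∈ A.faces ↔ σ.image f ∈ X.faces)

/-- An isomorphism of `A` onto `X`: a bijection of vertex sets carrying simplexes to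
simplexes in both directions. -/
def IsIso [DecidableEq V] (f : W → V) (A : SComplex W) (X : SComplex V) : Prop :=
  Set.BijOn f A.verts X.verts ∧
  ∀ σ : Finset W, (σ : Set W) ⊆ A.verts → (σ ∈ A.faces ↔ σ.image f ∈ X.faces)

/-- The complex obtained from `X` by removing a set `𝓕` of simplexes: all faces of `X`
containing no member of `𝓕` as a subset. -/
def remove (X : SComplex V) (𝓕 : Set (Finset V)) : SComplex V where
  faces := {σ | σ ∈ X.faces ∧ ∀ τ ∈ 𝓕, ¬ τ ⊆ σ}
  nonempty_of_mem := fun _ h => X.nonempty_of_mem h.1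
  down_closed := fun _ hσ _ hρ hne =>
    ⟨X.down_closed hσ.1 hρ hne, fun τ hτ hsub => hσ.2 τ hτ (hsub.trans hρ)⟩

/-- `M'(r)`: the number of simplicial complexes (including the empty complex) with vertex
set contained in a fixed `r`-element set. -/
noncomputable def Mprime (r : ℕ) : ℕ :=
  Nat.card {A : Set (Finset (Fin r)) // (∀ σ ∈ A, σ.Nonempty) ∧ DownClosed A}

/-- The 1-skeleton of a complex, as a simple graph on the ambient vertex type. -/
def skeletonGraph [DecidableEq V] (Y : SComplex V) : SimpleGraph V where
  Adj u v := u ≠ v ∧ ({u, v} : Finset V) ∈ Y.faces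
  symm := ⟨fun u v h => ⟨h.1.symm, by rw [Finset.pair_comm]; exact h.2⟩⟩
  loopless := ⟨fun v h => h.1 rfl⟩

/-- The vertexes spanned by a family of simplexes. -/
def vertsOf (L : Set (Finset V)) : Set V := ⋃ σ ∈ L, (σ : Set V)

/-- `X` is `r`-conic: `X` is nonempty and every subcomplex `L ⊆ X` with at most `r`
vertexes is contained in the closed star of some vertex of `X`. -/
def Conic [DecidableEq V] (X : SComplex V) (r : ℕ) : Prop :=
  X.faces.Nonempty ∧
  ∀ L : Set (Finset V), L ⊆ X.faces → DownClosed L →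
    (vertsOf L).Finite → (vertsOf L).ncard ≤ r →
      ∃ v ∈ X.verts, ∀ σ ∈ L, insert v σ ∈ X.faces

/-- The intersection `⋂ᵢ St_K(vᵢ)` of the closed stars of the vertexes `v i`,
as a simplicial complex. -/
def starsInter [DecidableEq V] (K : SComplex V) {t : ℕ} (v : Fin t → V) : SComplex V where
  faces := {σ | σ ∈ K.faces ∧ ∀ i, insert (v i) σ ∈ K.faces}
  nonempty_of_mem := fun _ h => K.nonempty_of_mem h.1
  down_closed := fun _ hσ _ hρ hne =>
    ⟨K.down_closed hσ.1 hρ hne, fun i =>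
      K.down_closed (hσ.2 i) (Finset.insert_subset_insert _ hρ)
        ⟨v i, Finset.mem_insert_self _ _⟩⟩

end SComplex

/-- The set `Q_{n,p} = {gᵃ : a ≡ β² mod p for some integer β}` in a finite field. -/
def paleyQ {F : Type*} [Field F] (p : ℕ) (g : Fˣ) : Set F :=
  {x | ∃ α : ℤ, (∃ β : ℤ, (p : ℤ) ∣ α - β ^ 2) ∧ x = ((g ^ α : Fˣ) : F)}

/-- The product `∏_{i<j} (e i - e j)` over all pairs from an enumeration `e`. -/
def pairProd {F : Type*} [Field F] {k : ℕ} (e : Fin k → F) : F :=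
  ∏ q ∈ Finset.univ.filter (fun q : Fin k × Fin k => q.1 < q.2), (e q.1 - e q.2)

/-- The Iterated Paley simplicial complex `X_{n,p}`: vertex set `F = 𝔽_n`, and a nonempty
finite set is a simplex iff for every subset with at least two elements, the product of
the pairwise differences (in any enumeration) lies in `Q_{n,p}`. -/
def paleyComplex (F : Type*) [Field F] [DecidableEq F] (p : ℕ) (g : Fˣ) : SComplex F where
  faces := {σ | σ.Nonempty ∧ ∀ τ ⊆ σ, 2 ≤ τ.card →
    ∀ e : Fin τ.card → F, Function.Injective e → Finset.image e Finset.univ = τ →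
      pairProd e ∈ paleyQ p g}
  nonempty_of_mem := fun _ h => h.1
  down_closed := fun _ hσ _ hτ hne => ⟨hne, fun ρ hρ => hσ.2 ρ (hρ.trans hτ)⟩

/-!
Write `L = Lk_X(σ)`. For `U ⊆ V(L)` and a subcomplex `A ⊆ L_U`, apply the ampleness of `X`
to `U ∪ σ` and the join `A * σ` of `A` with the full simplex on `σ`. The vertex `v` this
produces satisfies `Lk_X(v) ∩ X_{U ∪ σ} = A * σ`; since `σ ∈ A * σ`, `v` is a vertex of `L`,
and for `τ ∈ L_U` one has `τ ∈ Lk_L(v) ↔ τ ∪ σ ∈ Lk_X(v) ↔ τ ∪ σ ∈ A * σ ↔ τ ∈ A`.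
As `|U ∪ σ| ≤ |U| + k + 1`, this needs only `|U| ≤ r - k - 1`.
-/

namespace SComplex

variable {V : Type*}

theorem coe_subset_verts_of_mem_faces {X : SComplex V} {σ : Finset V} (hσ : σ ∈ X.faces) :
    (σ : Set V) ⊆ X.verts := fun v hv =>
  X.down_closed hσ (Finset.singleton_subset_iff.mpr hv) (Finset.singleton_nonempty v)

/-- The faces of the join `A * σ` of a family `A` with the full simplex on `σ`. -/
def joinSimplex [DecidableEq V] (A : Set (Finset V)) (σ : Finset V) : Set (Finset V) :=
  {ρ | ρ.Nonempty ∧ (ρ ⊆ σ ∨ ρ \ σ ∈ A)}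

section Link

variable [DecidableEq V] {X : SComplex V} {A : Set (Finset V)} {σ τ U : Finset V} {v : V}

theorem self_mem_joinSimplex (hσ : σ.Nonempty) : σ ∈ joinSimplex A σ :=
  ⟨hσ, Or.inl subset_rfl⟩

theorem union_mem_joinSimplex_iff (hτ : τ.Nonempty) (hτσ : Disjoint τ σ) :
    τ ∪ σ ∈ joinSimplex A σ ↔ τ ∈ A := by
  have hsdiff : (τ ∪ σ) \ σ = τ := by
    rw [Finset.union_sdiff_right, Finset.sdiff_eq_self_of_disjoint hτσ]
  have hτ_not_sub : ¬ τ ∪ σ ⊆ σ := fun h => hτ.ne_empty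
    (Finset.disjoint_self_iff_empty τ |>.mp (hτσ.mono_right (Finset.subset_union_left.trans h)))
  simp only [joinSimplex, Set.mem_ofPred_eq, hsdiff, hτ_not_sub, false_or,
    and_iff_right (hτ.mono Finset.subset_union_left)]

theorem downClosed_joinSimplex (hA : DownClosed A) : DownClosed (joinSimplex A σ) := by
  rintro ρ ⟨-, hρ⟩ ρ' hρ' hne'
  refine ⟨hne', ?_⟩
  by_cases hρ'σ : ρ' ⊆ σ
  · exact Or.inl hρ'σ
  · rcases hρ with hρσ | hρA
    · exact absurd (hρ'.trans hρσ) hρ'σ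
    · exact Or.inr (hA hρA (Finset.sdiff_subset_sdiff hρ' subset_rfl)
        (Finset.sdiff_nonempty.mpr hρ'σ))

theorem joinSimplex_subset_induced (hσ : σ ∈ X.faces)
    (hA : A ⊆ (X.linkSimplex σ).induced U) :
    joinSimplex A σ ⊆ X.induced ↑(U ∪ σ) := by
  rintro ρ ⟨hne, hρσ | hρA⟩
  · exact ⟨X.down_closed hσ hρσ hne, Finset.coe_subset.mpr (hρσ.trans Finset.subset_union_right)⟩
  · obtain ⟨⟨-, -, hface⟩, hU⟩ := hA hρA
    have hρ : ρ ⊆ ρ \ σ ∪ σ := by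
      rw [Finset.sdiff_union_self_eq_union]; exact Finset.subset_union_left
    refine ⟨X.down_closed hface hρ hne, Finset.coe_subset.mpr (hρ.trans ?_)⟩
    exact Finset.union_subset_union (Finset.coe_subset.mp hU) subset_rfl

theorem mem_verts_linkSimplex_iff (hσ : σ ∈ X.faces) :
    v ∈ (X.linkSimplex σ).verts ↔ σ ∈ X.link v := by
  simp only [verts, linkSimplex, link, Set.mem_ofPred_eq, Finset.disjoint_singleton_left,
    ← Finset.insert_eq]
  exact ⟨fun h => ⟨hσ, h.2.1, h.2.2⟩,
    fun h => ⟨X.down_closed h.2.2 (by simp) (Finset.singleton_nonempty v), h.2.1, h.2.2⟩⟩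

theorem mem_link_linkSimplex_iff (hv : v ∉ σ) :
    τ ∈ (X.linkSimplex σ).link v ↔ τ ∈ (X.linkSimplex σ).faces ∧ τ ∪ σ ∈ X.link v := by
  simp only [linkSimplex, link, Set.mem_ofPred_eq, Finset.disjoint_insert_left,
    Finset.insert_union, Finset.mem_union, not_or]
  constructor
  · rintro ⟨hτ, hvτ, -, -, hins⟩
    exact ⟨hτ, hτ.2.2, ⟨hvτ, hv⟩, hins⟩
  · rintro ⟨hτ, -, ⟨hvτ, -⟩, hins⟩
    exact ⟨hτ, hvτ, X.down_closed hins (Finset.insert_subset_insert v Finset.subset_union_left)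
      (Finset.insert_nonempty v τ), ⟨hv, hτ.2.1⟩, hins⟩

theorem exists_link_linkSimplex_inter_induced_eq {r : ℕ} (hX : X.Ample r) (hσ : σ ∈ X.faces)
    (hU : (U : Set V) ⊆ (X.linkSimplex σ).verts) (hUσ : U.card + σ.card ≤ r)
    (hA : A ⊆ (X.linkSimplex σ).induced U) (hAdc : DownClosed A) :
    ∃ v ∈ (X.linkSimplex σ).verts, v ∉ U ∧
      (X.linkSimplex σ).link v ∩ (X.linkSimplex σ).induced U = A := by
  have hUσ_verts : ((U ∪ σ : Finset V) : Set V) ⊆ X.verts := by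
    rw [Finset.coe_union]
    exact Set.union_subset (fun u hu => (hU hu).1) (coe_subset_verts_of_mem_faces hσ)
  obtain ⟨v, -, hvUσ, heq⟩ := hX.2 (U ∪ σ) hUσ_verts ((Finset.card_union_le U σ).trans hUσ)
    (joinSimplex A σ) (joinSimplex_subset_induced hσ hA) (downClosed_joinSimplex hAdc)
  obtain ⟨hvU, hvσ⟩ := not_or.mp (Finset.mem_union.not.mp hvUσ)
  have hlink_iff : ∀ τ ∈ (X.linkSimplex σ).induced U,
      τ ∪ σ ∈ X.link v ↔ τ ∪ σ ∈ joinSimplex A σ := fun τ ⟨hτ, hτU⟩ => by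
    rw [← heq, Set.mem_inter_iff, and_iff_left]
    exact ⟨hτ.2.2, Finset.coe_subset.mpr
      (Finset.union_subset_union (Finset.coe_subset.mp hτU) subset_rfl)⟩
  have hσv : σ ∈ X.link v := (heq ▸ self_mem_joinSimplex (X.nonempty_of_mem hσ) :
    σ ∈ X.link v ∩ X.induced ↑(U ∪ σ)).1
  refine ⟨v, (mem_verts_linkSimplex_iff hσ).mpr hσv, hvU, Set.ext fun τ => ?_⟩
  rw [Set.mem_inter_iff, mem_link_linkSimplex_iff hvσ]
  constructor
  · rintro ⟨⟨hτ, hτv⟩, hτU⟩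
    exact (union_mem_joinSimplex_iff (X.nonempty_of_mem hτ.1) hτ.2.1).mp
      ((hlink_iff τ hτU).mp hτv)
  · intro hτA
    have hτU := hA hτA
    exact ⟨⟨hτU.1, (hlink_iff τ hτU).mpr
      ((union_mem_joinSimplex_iff (X.nonempty_of_mem hτU.1.1) hτU.1.2.1).mpr hτA)⟩, hτU⟩

end Link

end SComplex

open SComplex in
/-- the link of a `k`-dimensional simplex of an `r`-ample complex
is `(r-k-1)`-ample. -/
theorem stmt1 {V : Type*} [DecidableEq V] (X : SComplex V) (r k : ℕ)
    (hX : X.Ample r) (σ : Finset V) (hσ : σ ∈ X.faces) (hcard : σ.card = k + 1)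
    (hk : k + 1 < r) :
    (X.linkSimplex σ).Ample (r - k - 1) := by
  refine ⟨?_, fun U hU hUcard A hA hAdc =>
    exists_link_linkSimplex_inter_induced_eq hX hσ hU (by omega) hA hAdc⟩
  obtain ⟨v, hv, -⟩ := exists_link_linkSimplex_inter_induced_eq (U := ∅) (A := ∅) hX hσ
    (by simp) (by simp [hcard]; omega) (Set.empty_subset _) (fun _ h => h.elim)
  exact ⟨{v}, hv⟩
end

section
/- Every r-ample simplicial complex has at least M'(r) + r vertexes, where M'(r) denotes the number of simplicial complexes (including the empty complex) whose vertex set is contained in {1, 2, …, r}. In particular, an r-ample complex has at least 2^(binom(r, ⌊r/2⌋)) + r vertexes. -/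
/-!
Inductively, ampleness applied to `A = X_U` extends a simplex `U` with `|U| < r` by one
vertex, so `X` contains a simplex `U` on `r` vertexes. Every complex on the vertexes of `U`
is then a subcomplex of `X_U`, and ampleness gives each one a vertex outside `U` whose link
cuts out exactly that subcomplex; distinct complexes get distinct vertexes. For the second
bound, distinct families of `⌈r/2⌉`-subsets of `{1, …, r}` generate distinct complexes.
-/

namespace SComplex

variable {V ι : Type*}

abbrev Complexes (ι : Type*) : Type _ :=
  {A : Set (Finset ι) // (∀ σ ∈ A, σ.Nonempty) ∧ DownClosed A}

theorem Mprime_eq_card_complexes (r : ℕ) : Mprime r = Nat.card (Complexes (Fin r)) := rfl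

theorem DownClosed.image_finsetImage [DecidableEq V] {A : Set (Finset ι)} (hA : DownClosed A)
    (f : ι → V) : DownClosed (Finset.image f '' A) := by
  rintro _ ⟨σ, hσ, rfl⟩ τ hτ hne
  obtain ⟨ρ, hρσ, rfl⟩ := Finset.subset_image_iff.mp hτ
  exact ⟨ρ, hA hσ hρσ (Finset.image_nonempty.mp hne), rfl⟩

/-- For nonempty `U` this is just `U ∈ X.faces`; this form also admits `U = ∅`. -/
def SpansSimplex (X : SComplex V) (U : Finset V) : Prop :=
  ∀ τ ⊆ U, τ.Nonempty → τ ∈ X.faces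

variable {X : SComplex V}

theorem SpansSimplex.coe_subset_verts {U : Finset V} (hU : X.SpansSimplex U) :
    (U : Set V) ⊆ X.verts :=
  fun x hx => hU {x} (Finset.singleton_subset_iff.mpr hx) (Finset.singleton_nonempty x)

theorem SpansSimplex.insert [DecidableEq V] {U : Finset V} {v : V} (hU : X.SpansSimplex U)
    (hv : v ∈ X.verts) (hlink : X.induced U ⊆ X.link v) : X.SpansSimplex (insert v U) := by
  intro τ hτ hne
  by_cases hvτ : v ∈ τ
  · have hτU : τ.erase v ⊆ U :=
      (Finset.erase_subset_erase v hτ).trans (Finset.erase_insert_subset v U)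
    rcases (τ.erase v).eq_empty_or_nonempty with hempty | hne'
    · obtain rfl : τ = {v} :=
        ((Finset.erase_eq_empty_iff τ v).mp hempty).resolve_left hne.ne_empty
      exact hv
    · have := (hlink ⟨hU _ hτU hne', by exact_mod_cast hτU⟩).2.2
      rwa [Finset.insert_erase hvτ] at this
  · exact hU τ ((Finset.subset_insert_iff_of_notMem hvτ).mp hτ) hne

theorem Ample.exists_spansSimplex [DecidableEq V] {r : ℕ} (hX : X.Ample r) :
    ∀ {n : ℕ}, n ≤ r → ∃ U : Finset V, U.card = n ∧ X.SpansSimplex U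
  | 0, _ => ⟨∅, rfl, fun τ hτ hne => absurd (Finset.subset_empty.mp hτ) hne.ne_empty⟩
  | n + 1, hn => by
    obtain ⟨U, hcard, hU⟩ := hX.exists_spansSimplex (Nat.le_of_succ_le hn)
    obtain ⟨v, hv, hvU, hlink⟩ := hX.2 U hU.coe_subset_verts (by omega) (X.induced U)
      subset_rfl (X.inducedSub U).down_closed
    exact ⟨insert v U, by rw [Finset.card_insert_of_notMem hvU, hcard],
      hU.insert hv (Set.inter_eq_right.mp hlink)⟩

theorem Ample.exists_injective_link [DecidableEq V] {r : ℕ} (hX : X.Ample r) {U : Finset V}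
    (hU : (U : Set V) ⊆ X.verts) (hUr : U.card ≤ r) :
    ∃ f : {A : Set (Finset V) // A ⊆ X.induced U ∧ DownClosed A} → V,
      Function.Injective f ∧ ∀ A, f A ∈ X.verts ∧ f A ∉ U := by
  choose f hf_verts hf_notMem hf_link using fun A : {A // A ⊆ X.induced U ∧ DownClosed A} =>
    hX.2 U hU hUr A.1 A.2.1 A.2.2
  refine ⟨f, fun A B hAB => Subtype.ext ?_, fun A => ⟨hf_verts A, hf_notMem A⟩⟩
  rw [← hf_link A, ← hf_link B, hAB]

theorem Ample.exists_card_complexes_add_le [DecidableEq V] [Fintype ι] {r : ℕ} (hX : X.Ample r)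
    (e : ι → V) (he : Function.Injective e)
    (hface : ∀ σ : Finset ι, σ.Nonempty → σ.image e ∈ X.faces) (hι : Fintype.card ι ≤ r) :
    ∃ S : Finset V, (S : Set V) ⊆ X.verts ∧ Nat.card (Complexes ι) + Fintype.card ι ≤ S.card := by
  classical
  set U := Finset.univ.image e
  have hUcard : U.card = Fintype.card ι := Finset.card_image_of_injective _ he
  have hU : X.SpansSimplex U := fun τ hτ hne => by
    obtain ⟨σ, -, rfl⟩ := Finset.subset_image_iff.mp hτ
    exact hface σ (Finset.image_nonempty.mp hne)
  obtain ⟨f, hf, hf_mem⟩ := hX.exists_injective_link hU.coe_subset_verts (hUcard ▸ hι)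
  let g : Complexes ι → {A : Set (Finset V) // A ⊆ X.induced U ∧ DownClosed A} :=
    fun A => ⟨Finset.image e '' A.1,
      by
        rintro _ ⟨σ, hσ, rfl⟩
        exact ⟨hface σ (A.2.1 σ hσ), by exact_mod_cast Finset.image_subset_image σ.subset_univ⟩,
      A.2.2.image_finsetImage e⟩
  have hg : Function.Injective g := fun A B hAB =>
    Subtype.ext (Set.image_injective.mpr (Finset.image_injective he) (congrArg Subtype.val hAB))
  have hdisj : Disjoint U (Finset.univ.image (f ∘ g)) := by
    rw [Finset.disjoint_right]
    rintro _ hx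
    obtain ⟨A, -, rfl⟩ := Finset.mem_image.mp hx
    exact (hf_mem (g A)).2
  refine ⟨U ∪ Finset.univ.image (f ∘ g), ?_, ?_⟩
  · rw [Finset.coe_union]
    refine Set.union_subset hU.coe_subset_verts fun _ hx => ?_
    obtain ⟨A, -, rfl⟩ := Finset.mem_image.mp hx
    exact (hf_mem (g A)).1
  · rw [Finset.card_union_of_disjoint hdisj, Finset.card_image_of_injective _ (hf.comp hg),
      hUcard, Finset.card_univ, Nat.card_eq_fintype_card, add_comm]

theorem two_pow_choose_le_card_complexes [Fintype ι] {k : ℕ} (hk : 0 < k) :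
    2 ^ (Fintype.card ι).choose k ≤ Nat.card (Complexes ι) := by
  let generate (T : Finset {σ : Finset ι // σ.card = k}) : Complexes ι :=
    ⟨{τ | τ.Nonempty ∧ ∃ σ ∈ T, τ ⊆ σ.1}, fun _ hτ => hτ.1,
      fun _ hτ _ hρ hne => ⟨hne, hτ.2.imp fun σ hσ => ⟨hσ.1, hρ.trans hσ.2⟩⟩⟩
  -- the generators are the maximal simplexes, as they all have the same size
  have generate_mono : ∀ T₁ T₂, generate T₁ = generate T₂ → T₁ ⊆ T₂ := by
    intro T₁ T₂ h σ hσ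
    have hmem : σ.1 ∈ (generate T₁).1 :=
      ⟨Finset.card_pos.mp (by rw [σ.2]; exact hk), σ, hσ, subset_rfl⟩
    obtain ⟨-, σ', hσ', hsub⟩ := h ▸ hmem
    rwa [Subtype.ext (Finset.eq_of_subset_of_card_le hsub (by rw [σ.2, σ'.2]))]
  calc 2 ^ (Fintype.card ι).choose k
      = Nat.card (Finset {σ : Finset ι // σ.card = k}) := by
        rw [Nat.card_eq_fintype_card, Fintype.card_finset, Fintype.card_finset_len]
    _ ≤ Nat.card (Complexes ι) := Nat.card_le_card_of_injective generate
        fun T₁ T₂ h => (generate_mono _ _ h).antisymm (generate_mono _ _ h.symm)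

theorem two_pow_choose_half_le_Mprime {r : ℕ} (hr : 1 ≤ r) : 2 ^ r.choose (r / 2) ≤ Mprime r := by
  rw [← Nat.choose_symm (Nat.div_le_self r 2), Mprime_eq_card_complexes]
  simpa using two_pow_choose_le_card_complexes (ι := Fin r) (k := r - r / 2) (by omega)

end SComplex

open SComplex in
/-- an `r`-ample complex has at least `M'(r) + r` vertexes, and in
particular at least `2 ^ (binom r ⌊r/2⌋) + r` vertexes. -/
theorem stmt2 {V : Type*} [DecidableEq V] (X : SComplex V) (r : ℕ) (hr : 1 ≤ r)
    (hX : X.Ample r) :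
    ∃ S : Finset V, (S : Set V) ⊆ X.verts ∧ Mprime r + r ≤ S.card ∧
      2 ^ r.choose (r / 2) + r ≤ S.card := by
  obtain ⟨U, hUcard, hU⟩ := hX.exists_spansSimplex le_rfl
  let E := U.equivFinOfCardEq hUcard
  obtain ⟨S, hS, hcard⟩ := hX.exists_card_complexes_add_le (fun i => (E.symm i : V))
    (Subtype.val_injective.comp E.symm.injective)
    (fun σ hσ => hU _ (Finset.image_subset_iff.mpr fun i _ => (E.symm i).2) (hσ.image _))
    (Fintype.card_fin r).le
  rw [← Mprime_eq_card_complexes, Fintype.card_fin] at hcard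
  have := two_pow_choose_half_le_Mprime hr
  exact ⟨S, hS, hcard, by omega⟩
end

section
/- For every integer r ≥ 5 and for every integer n ≥ r·2^r·2^(2^r), there exists an r-ample simplicial complex having exactly n vertexes. -/
/-!
Label every finite set of vertexes by a bit `f τ`, and let the simplexes be the nonempty sets all
of whose subsets with at least two elements are labelled `true`. For `v ∉ U`, the part of the
link of `v` inside `U` is then governed by the labels of the sets `insert v τ`, `∅ ≠ τ ⊆ U`, so
the complex is `r`-ample as soon as for every `U` with `|U| ≤ r` and every family `B` of subsets
of `U` some `v ∉ U` has `f (insert v τ) = [τ ∈ B]` for all these `τ`. These sets are distinct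
for distinct pairs `(v, τ)`, so a uniformly random labelling misses a fixed pair `(U, B)` with
probability `(1 - 2^{-(2^|U| - 1)})^{n - |U|} ≤ 2^{-q}`, `q = ⌊(n - r) / 2^{2^r - 1}⌋`, while
there are at most `(r + 1) n^r 2^{2^r}` pairs; for `n ≥ r 2^r 2^{2^r}` and `r ≥ 5` this
number is below `2^q`.
-/

open Finset

lemma sub_one_pow_mul_two_pow_div_le {a : ℕ} (ha : 1 ≤ a) (k : ℕ) :
    (a - 1) ^ k * 2 ^ (k / a) ≤ a ^ k := by
  have two_mul_le : 2 * (a - 1) ^ a ≤ a ^ a := by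
    obtain ⟨x, rfl⟩ := Nat.exists_eq_add_of_le' ha
    have bernoulli := pow_add_mul_le_add_pow (a := x) (b := 1) (Nat.zero_le _) (by omega) (x + 1)
    simp only [Nat.add_sub_cancel, mul_one, Nat.cast_id] at bernoulli
    calc 2 * x ^ (x + 1) = x ^ (x + 1) + x * x ^ x := by ring
      _ ≤ x ^ (x + 1) + (x + 1) * x ^ x := by gcongr; omega
      _ ≤ (x + 1) ^ (x + 1) := bernoulli
  obtain ⟨q, s, hs, rfl⟩ : ∃ q s, s < a ∧ k = a * q + s :=
    ⟨k / a, k % a, Nat.mod_lt _ ha, (Nat.div_add_mod k a).symm⟩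
  rw [Nat.mul_add_div (by omega), Nat.div_eq_of_lt hs, add_zero]
  calc (a - 1) ^ (a * q + s) * 2 ^ q = (2 * (a - 1) ^ a) ^ q * (a - 1) ^ s := by ring
    _ ≤ (a ^ a) ^ q * a ^ s := by gcongr; omega
    _ = a ^ (a * q + s) := by ring

lemma cube_le_two_pow {s : ℕ} (hs : 10 ≤ s) : s ^ 3 ≤ 2 ^ s := by
  induction s, hs using Nat.le_induction with
  | base => norm_num
  | succ m hm ih =>
    have : 10 * m ^ 2 ≤ m ^ 3 := by rw [pow_succ m 2, mul_comm]; gcongr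
    calc (m + 1) ^ 3 ≤ 2 * m ^ 3 := by nlinarith
      _ ≤ 2 ^ (m + 1) := by rw [pow_succ 2 m]; omega

lemma two_pow_mul_log_add_le {r n : ℕ} (hr : 5 ≤ r) (hn : r * 2 ^ r * 2 ^ 2 ^ r ≤ n) :
    2 ^ (2 ^ r - 1) * (r * Nat.log 2 n + 2 * r + 2 ^ r + 1) ≤ n := by
  set L := Nat.log 2 n
  set e := 2 ^ (r - 1)
  set A := 2 ^ (2 ^ r - 1)
  have h2r : 2 ^ r = 2 * e := by rw [← pow_succ']; congr 1; omega
  have hre : r ≤ e := by have := Nat.lt_two_pow_self (n := r - 1); omega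
  have he : 16 ≤ e := by
    calc 16 = 2 ^ 4 := by norm_num
      _ ≤ e := Nat.pow_le_pow_right (by norm_num) (by omega)
  rw [h2r]
  -- either `log n` is small and the hypothesis on `n` suffices, or `2 ^ log n ≤ n` alone does
  rcases le_or_gt L (3 * e) with hL | hL
  · have hA : 2 ^ 2 ^ r = 2 * A := by rw [← pow_succ']; congr 1; omega
    calc A * (r * L + 2 * r + 2 * e + 1) ≤ A * (4 * r * e) := by gcongr; nlinarith
      _ = r * 2 ^ r * 2 ^ 2 ^ r := by rw [hA, h2r]; ring
      _ ≤ n := hn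
  · set s := L + 1 - 2 * e
    have hs : 2 ^ L = A * 2 ^ s := by rw [← pow_add]; congr 1; omega
    have hs18 : 18 ≤ s := by omega
    have hrL : r * L ≤ s * (3 * s) := Nat.mul_le_mul (by omega) (by omega)
    have : 18 * s ^ 2 ≤ s ^ 3 := by rw [pow_succ s 2, mul_comm]; gcongr
    have hn0 : n ≠ 0 := (lt_of_lt_of_le (by positivity) hn).ne'
    calc A * (r * L + 2 * r + 2 * e + 1) ≤ A * 2 ^ s := by
          gcongr
          nlinarith [cube_le_two_pow (s := s) (by omega)]
      _ = 2 ^ L := hs.symm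
      _ ≤ n := Nat.pow_log_le_self 2 hn0

lemma succ_mul_pow_mul_lt {r n : ℕ} (hr : 5 ≤ r) (hn : r * 2 ^ r * 2 ^ 2 ^ r ≤ n) :
    (r + 1) * n ^ r * 2 ^ 2 ^ r < 2 ^ ((n - r) / 2 ^ (2 ^ r - 1)) := by
  have key := two_pow_mul_log_add_le hr hn
  set L := Nat.log 2 n
  have hL : r * L + 2 * r + 2 ^ r ≤ (n - r) / 2 ^ (2 ^ r - 1) := by
    have : r < 2 ^ (2 ^ r - 1) :=
      Nat.lt_two_pow_self.trans_le (Nat.pow_le_pow_right (by norm_num)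
        (by have := Nat.lt_two_pow_self (n := r); omega))
    rw [Nat.le_div_iff_mul_le (by positivity)]
    rw [mul_add, mul_one] at key
    rw [mul_comm]
    omega
  calc (r + 1) * n ^ r * 2 ^ 2 ^ r ≤ 2 ^ r * n ^ r * 2 ^ 2 ^ r := by
        gcongr; exact Nat.lt_two_pow_self
    _ < 2 ^ r * (2 ^ (L + 1)) ^ r * 2 ^ 2 ^ r := by
        gcongr; exact Nat.lt_pow_succ_log_self (by norm_num) n
    _ = 2 ^ (r * L + 2 * r + 2 ^ r) := by ring
    _ ≤ 2 ^ ((n - r) / 2 ^ (2 ^ r - 1)) := Nat.pow_le_pow_right (by norm_num) hL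

lemma card_filter_comp_embedding_mul {α β γ : Type*} [Fintype α] [DecidableEq α] [Fintype β]
    [DecidableEq β] [Fintype γ] (ι : β ↪ α) (P : (β → γ) → Prop) [DecidablePred P] :
    #{f : α → γ | P (f ∘ ι)} * Fintype.card γ ^ Fintype.card β =
      #{g : β → γ | P g} * Fintype.card γ ^ Fintype.card α := by
  let split : (α → γ) ≃ (β → γ) × ({a // a ∉ Set.range ι} → γ) :=
    (Equiv.piEquivPiSubtypeProd (· ∈ Set.range ι) fun _ => γ).trans
      (Equiv.prodCongr ((Equiv.ofInjective ι ι.injective).arrowCongr (Equiv.refl γ)).symm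
        (Equiv.refl _))
  have hsplit (f : α → γ) : (split f).1 = f ∘ ι := rfl
  have hfilter : Fintype.card {f : α → γ // P (f ∘ ι)} =
      Fintype.card {g : β → γ // P g} * Fintype.card ({a // a ∉ Set.range ι} → γ) := by
    rw [← Fintype.card_prod]
    exact Fintype.card_congr ((split.subtypeEquiv fun f => by rw [hsplit]).trans
      Equiv.prodSubtypeFstEquivSubtypeProd)
  have htotal : Fintype.card γ ^ Fintype.card α =
      Fintype.card γ ^ Fintype.card β * Fintype.card ({a // a ∉ Set.range ι} → γ) := by
    rw [← Fintype.card_fun, ← Fintype.card_fun, ← Fintype.card_prod]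
    exact Fintype.card_congr split
  rw [← Fintype.card_subtype, ← Fintype.card_subtype, hfilter, htotal]
  ring

lemma card_filter_forall_ne {K T γ : Type*} [Fintype K] [DecidableEq K] [Fintype T]
    [DecidableEq T] [Fintype γ] [DecidableEq γ] (h : T → γ) :
    #{g : K × T → γ | ∀ k, (fun t => g (k, t)) ≠ h} =
      (Fintype.card γ ^ Fintype.card T - 1) ^ Fintype.card K := by
  have hpi : ({g : K → T → γ | ∀ k, g k ≠ h} : Finset _) =
      Fintype.piFinset fun _ => univ.erase h := by
    ext g; simp
  rw [card_equiv (Equiv.curry K T γ) (t := {g | ∀ k, g k ≠ h}) (by simp; exact fun _ => Iff.rfl),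
    hpi, Fintype.card_piFinset]
  simp [card_erase_of_mem]

lemma card_filter_card_le_le {V : Type*} [Fintype V] [DecidableEq V] (hV : 0 < Fintype.card V)
    (r : ℕ) : #{U : Finset V | #U ≤ r} ≤ (r + 1) * Fintype.card V ^ r := by
  have hsub : ({U : Finset V | #U ≤ r} : Finset _) ⊆
      (range (r + 1)).biUnion fun i => powersetCard i univ := by
    intro U hU
    simp only [mem_filter, mem_univ, true_and] at hU
    simp only [mem_biUnion, mem_range, mem_powersetCard, subset_univ, true_and]
    exact ⟨#U, by omega, rfl⟩
  calc #{U : Finset V | #U ≤ r} ≤ ∑ i ∈ range (r + 1), #(powersetCard i (univ : Finset V)) :=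
        (card_le_card hsub).trans card_biUnion_le
    _ ≤ ∑ i ∈ range (r + 1), Fintype.card V ^ r := by
        gcongr with i hi
        rw [card_powersetCard, card_univ]
        exact (Nat.choose_le_pow _ _).trans
          (Nat.pow_le_pow_right hV (Nat.lt_succ_iff.mp (mem_range.mp hi)))
    _ = (r + 1) * Fintype.card V ^ r := by simp

lemma eq_and_eq_of_insert_eq_insert {V : Type*} [DecidableEq V] {U τ ρ : Finset V} {v w : V}
    (hv : v ∉ U) (hτ : τ ⊆ U) (hρ : ρ ⊆ U) (h : insert v τ = insert w ρ) : v = w ∧ τ = ρ := by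
  obtain rfl : v = w :=
    (mem_insert.mp (h ▸ mem_insert_self v τ)).resolve_right fun hvρ => hv (hρ hvρ)
  exact ⟨rfl, by rw [← erase_insert fun h' => hv (hτ h'), h, erase_insert fun h' => hv (hρ h')]⟩

section Labelling

variable {V : Type*} [DecidableEq V]

def RealizesAt (f : Finset V → Bool) (U : Finset V) (B : Finset (Finset V)) (v : V) : Prop :=
  ∀ τ ⊆ U, τ.Nonempty → f (insert v τ) = decide (τ ∈ B)

instance (f : Finset V → Bool) (U : Finset V) (B : Finset (Finset V)) (v : V) :
    Decidable (RealizesAt f U B v) := by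
  unfold RealizesAt; infer_instance

def HasExtensionProperty (r : ℕ) (f : Finset V → Bool) : Prop :=
  ∀ U : Finset V, #U ≤ r → ∀ B ⊆ U.powerset, ∃ v ∉ U, RealizesAt f U B v

lemma card_not_realizesAt_mul_eq [Fintype V] (U : Finset V) (B : Finset (Finset V)) :
    #{f : Finset V → Bool | ∀ v ∉ U, ¬ RealizesAt f U B v} *
        (2 ^ (2 ^ #U - 1)) ^ (Fintype.card V - #U) =
      (2 ^ (2 ^ #U - 1) - 1) ^ (Fintype.card V - #U) * 2 ^ 2 ^ Fintype.card V := by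
  let K := {v // v ∉ U}
  let T := {τ : Finset V // τ ⊆ U ∧ τ.Nonempty}
  have hK : Fintype.card K = Fintype.card V - #U := by simp [K]
  have hT : Fintype.card T = 2 ^ #U - 1 := by
    rw [Fintype.card_congr (Equiv.subtypeEquivRight (q := (· ∈ U.powerset.erase ∅))
      (by simp [nonempty_iff_ne_empty, and_comm])), Fintype.card_coe,
      card_erase_of_mem (by simp), card_powerset]
  obtain ⟨ι, hι⟩ : ∃ ι : K × T ↪ Finset V, ∀ p, ι p = insert p.1.1 p.2.1 := by
    refine ⟨⟨fun p => insert p.1.1 p.2.1, fun p q h => ?_⟩, fun _ => rfl⟩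
    obtain ⟨hvw, hτρ⟩ := eq_and_eq_of_insert_eq_insert p.1.2 p.2.2.1 q.2.2.1 h
    exact Prod.ext (Subtype.ext hvw) (Subtype.ext hτρ)
  let tgt : T → Bool := fun τ => decide (τ.1 ∈ B)
  have hbad : #{f : Finset V → Bool | ∀ v ∉ U, ¬ RealizesAt f U B v} =
      #{f : Finset V → Bool | ∀ k, (fun t => (f ∘ ι) (k, t)) ≠ tgt} := by
    congr 1; ext f
    simp only [mem_filter, mem_univ, true_and, RealizesAt, ne_eq, funext_iff, not_forall,
      Function.comp_apply, hι, tgt, exists_prop]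
    exact ⟨fun h k => let ⟨τ, hτU, hτ, hne⟩ := h k.1 k.2; ⟨⟨τ, hτU, hτ⟩, hne⟩,
      fun h v hv => let ⟨τ, hne⟩ := h ⟨v, hv⟩; ⟨τ.1, τ.2.1, τ.2.2, hne⟩⟩
  have hcount := card_filter_comp_embedding_mul ι (fun g => ∀ k, (fun t => g (k, t)) ≠ tgt)
  rw [card_filter_forall_ne, Fintype.card_prod, Fintype.card_bool, Fintype.card_finset,
    mul_comm (Fintype.card K), pow_mul, hK, hT] at hcount
  rwa [hbad]

lemma card_not_realizesAt_mul_le [Fintype V] {r : ℕ} {U : Finset V} (hU : #U ≤ r)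
    (B : Finset (Finset V)) :
    #{f : Finset V → Bool | ∀ v ∉ U, ¬ RealizesAt f U B v} *
        2 ^ ((Fintype.card V - r) / 2 ^ (2 ^ r - 1)) ≤ 2 ^ 2 ^ Fintype.card V := by
  set a := 2 ^ (2 ^ #U - 1)
  set k := Fintype.card V - #U
  have hq : (Fintype.card V - r) / 2 ^ (2 ^ r - 1) ≤ k / a := by
    have : 2 ^ #U ≤ 2 ^ r := Nat.pow_le_pow_right (by norm_num) hU
    exact (Nat.div_le_div_left (Nat.pow_le_pow_right (by norm_num) (by omega))
      Nat.one_le_two_pow).trans (Nat.div_le_div_right (by omega))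
  refine Nat.le_of_mul_le_mul_right ?_ (pow_pos Nat.one_le_two_pow k : 0 < a ^ k)
  calc _ ≤ #{f : Finset V → Bool | ∀ v ∉ U, ¬ RealizesAt f U B v} * a ^ k * 2 ^ (k / a) := by
        rw [mul_right_comm]; gcongr; norm_num
    _ = (a - 1) ^ k * 2 ^ (k / a) * 2 ^ 2 ^ Fintype.card V := by
        rw [card_not_realizesAt_mul_eq]; ring
    _ ≤ a ^ k * 2 ^ 2 ^ Fintype.card V := by
        gcongr; exact sub_one_pow_mul_two_pow_div_le Nat.one_le_two_pow k
    _ = 2 ^ 2 ^ Fintype.card V * a ^ k := mul_comm _ _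

lemma exists_hasExtensionProperty [Fintype V] {r : ℕ} (hr : 5 ≤ r)
    (hV : r * 2 ^ r * 2 ^ 2 ^ r ≤ Fintype.card V) :
    ∃ f : Finset V → Bool, HasExtensionProperty r f := by
  have hV0 : 0 < Fintype.card V := lt_of_lt_of_le (by positivity) hV
  set q := (Fintype.card V - r) / 2 ^ (2 ^ r - 1)
  set M := 2 ^ 2 ^ Fintype.card V
  let pairs : Finset ((_ : Finset V) × Finset (Finset V)) :=
    ({U | #U ≤ r} : Finset (Finset V)).sigma fun U => U.powerset.powerset
  let bad := pairs.biUnion fun p => {f | ∀ v ∉ p.1, ¬ RealizesAt f p.1 p.2 v}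
  have hpairs : #pairs ≤ (r + 1) * Fintype.card V ^ r * 2 ^ 2 ^ r := by
    calc #pairs ≤ ∑ _ ∈ ({U | #U ≤ r} : Finset (Finset V)), 2 ^ 2 ^ r := by
          rw [card_sigma]
          gcongr with U hU
          rw [card_powerset, card_powerset]
          exact Nat.pow_le_pow_right (by norm_num)
            (Nat.pow_le_pow_right (by norm_num) (mem_filter.mp hU).2)
      _ ≤ (r + 1) * Fintype.card V ^ r * 2 ^ 2 ^ r := by
          rw [sum_const, smul_eq_mul]
          gcongr
          exact card_filter_card_le_le hV0 r
  have hbad : #bad * 2 ^ q ≤ #pairs * M :=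
    calc #bad * 2 ^ q ≤ (∑ p ∈ pairs, #{f | ∀ v ∉ p.1, ¬ RealizesAt f p.1 p.2 v}) * 2 ^ q := by
          gcongr; exact card_biUnion_le
      _ ≤ ∑ _ ∈ pairs, M := by
          rw [sum_mul]
          gcongr with p hp
          exact card_not_realizesAt_mul_le (mem_filter.mp (mem_sigma.mp hp).1).2 p.2
      _ = #pairs * M := by rw [sum_const, smul_eq_mul]
  have hlt : #bad < #(univ : Finset (Finset V → Bool)) := by
    rw [card_univ, Fintype.card_fun, Fintype.card_finset, Fintype.card_bool]
    refine Nat.lt_of_mul_lt_mul_right (a := 2 ^ q) (hbad.trans_lt ?_)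
    rw [mul_comm M]
    exact Nat.mul_lt_mul_of_pos_right (hpairs.trans_lt (succ_mul_pow_mul_lt hr hV))
      (by positivity)
  obtain ⟨f, -, hf⟩ := exists_mem_notMem_of_card_lt_card hlt
  refine ⟨f, fun U hU B hB => ?_⟩
  by_contra! hnone
  exact hf (mem_biUnion.mpr ⟨⟨U, B⟩, by simpa [pairs] using ⟨hU, hB⟩, by simpa using hnone⟩)

end Labelling

namespace SComplex

variable {V : Type*}

def ofLabelling (f : Finset V → Bool) : SComplex V where
  faces := {σ | σ.Nonempty ∧ ∀ τ ⊆ σ, 2 ≤ #τ → f τ = true}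
  nonempty_of_mem := fun _ h => h.1
  down_closed := fun _ hσ _ hτ hne => ⟨hne, fun ρ hρ => hσ.2 ρ (hρ.trans hτ)⟩

lemma singleton_mem_faces_ofLabelling (f : Finset V → Bool) (v : V) :
    {v} ∈ (ofLabelling f).faces :=
  ⟨singleton_nonempty v, fun τ hτ h2 => by have := card_le_card hτ; simp at this; omega⟩

lemma verts_ofLabelling (f : Finset V → Bool) : (ofLabelling f).verts = Set.univ :=
  Set.eq_univ_of_forall (singleton_mem_faces_ofLabelling f)

variable [DecidableEq V]

lemma mem_link_ofLabelling_iff {f : Finset V → Bool} {v : V} {σ : Finset V} :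
    σ ∈ (ofLabelling f).link v ↔
      σ ∈ (ofLabelling f).faces ∧ v ∉ σ ∧ ∀ τ ⊆ σ, τ.Nonempty → f (insert v τ) = true := by
  refine and_congr_right fun hσ => and_congr_right fun hvσ => ⟨fun h τ hτσ hτ => ?_, fun h => ?_⟩
  · refine h.2 _ (insert_subset_insert v hτσ) ?_
    rw [card_insert_of_notMem fun hvτ => hvσ (hτσ hvτ)]
    exact Nat.succ_le_succ hτ.card_pos
  · refine ⟨insert_nonempty v σ, fun τ hτ h2 => ?_⟩
    by_cases hvτ : v ∈ τ
    · rw [← insert_erase hvτ]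
      refine h _ (subset_insert_iff.mp hτ) ?_
      rw [← card_pos, card_erase_of_mem hvτ]; omega
    · exact hσ.2 τ (by simpa [hvτ] using subset_insert_iff.mp hτ) h2

lemma ample_ofLabelling {r : ℕ} {f : Finset V → Bool} (hf : HasExtensionProperty r f) :
    (ofLabelling f).Ample r := by
  classical
  refine ⟨?_, fun U _ hU A hA hAdown => ?_⟩
  · obtain ⟨v, -⟩ := hf ∅ (by simp) ∅ (empty_subset _)
    exact ⟨{v}, singleton_mem_faces_ofLabelling f v⟩
  obtain ⟨v, hvU, hv⟩ := hf U hU {τ ∈ U.powerset | τ ∈ A} (filter_subset _ _)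
  refine ⟨v, singleton_mem_faces_ofLabelling f v, hvU, Set.ext fun σ => ?_⟩
  rw [Set.mem_inter_iff, mem_link_ofLabelling_iff]
  refine ⟨fun ⟨⟨_, _, hlink⟩, hσ⟩ => ?_, fun hσA => ?_⟩
  · have hσU : σ ⊆ U := coe_subset.mp hσ.2
    have := hv σ hσU hσ.1.1
    rw [hlink σ Subset.rfl hσ.1.1] at this
    simpa [hσU] using this
  · have hσ := hA hσA
    have hσU : σ ⊆ U := coe_subset.mp hσ.2
    refine ⟨⟨hσ.1, fun hvσ => hvU (hσU hvσ), fun τ hτσ hτ => ?_⟩, hσ⟩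
    rw [hv τ (hτσ.trans hσU) hτ]
    simpa [hτσ.trans hσU] using hAdown hσA hτσ hτ

end SComplex

open SComplex in
/-- for every `r ≥ 5` and every `n ≥ r·2^r·2^(2^r)` there is an
`r`-ample simplicial complex with exactly `n` vertexes. -/
theorem stmt3 (r n : ℕ) (hr : 5 ≤ r) (hn : r * 2 ^ r * 2 ^ 2 ^ r ≤ n) :
    ∃ X : SComplex (Fin n), X.verts = Set.univ ∧ X.Ample r := by
  obtain ⟨f, hf⟩ := exists_hasExtensionProperty (V := Fin n) hr (by simpa using hn)
  exact ⟨ofLabelling f, verts_ofLabelling f, ample_ofLabelling hf⟩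
end

section
/- Let r ≥ 3 and let X be an r-ample simplicial complex. Let Y be obtained from X by removing a set of a₀ vertexes and a₁ edges (i.e., removing a finite set 𝓕 of simplexes consisting of a₀ singletons and a₁ two-element simplexes, so Y = { σ ∈ X : no τ ∈ 𝓕 satisfies τ ⊆ σ }). If a₀ + 2a₁ < M'(r−2) + r − 2, then Y is 2-ample; in particular, the 1-skeleton of Y is a connected graph. -/
/-!
Fix `U` with `|U| ≤ 2` and a subcomplex `A ⊆ Y_U`. In the `r`-ample complex `X` there is a
simplex `W` of `r - 2` vertexes realizing `(U, A)`, and for each of the `M'(r - 2)` subcomplexes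
`B` of `W` a vertex whose link meets `X_{U ∪ W}` in exactly `A ∪ B`; these vertexes are pairwise
distinct, lie outside `W`, and realize `(U, A)` as well. So more than `a₀ + 2a₁` vertexes realize
`(U, A)` in `X`, hence one of them lies in no removed simplex, and such a vertex still realizes
`(U, A)` in `Y`.
-/

namespace SComplex

variable {V : Type*}

lemma DownClosed.union {A B : Set (Finset V)} (hA : DownClosed A) (hB : DownClosed B) :
    DownClosed (A ∪ B) := by
  rintro σ (hσ | hσ) τ hτ hne
  exacts [Or.inl (hA hσ hτ hne), Or.inr (hB hσ hτ hne)]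

lemma DownClosed.image_map {α β : Type*} {B : Set (Finset α)} (hB : DownClosed B)
    (e : α ↪ β) : DownClosed (Finset.map e '' B) := by
  rintro _ ⟨σ, hσ, rfl⟩ τ hτ hne
  obtain ⟨ρ, hρσ, rfl⟩ := Finset.subset_map_iff.mp hτ
  exact ⟨ρ, hB hσ hρσ (Finset.map_nonempty.mp hne), rfl⟩

lemma downClosed_nonempty_subsets (W : Finset V) :
    DownClosed {σ : Finset V | σ.Nonempty ∧ σ ⊆ W} :=
  fun _ hσ _ hτ hne => ⟨hne, hτ.trans hσ.2⟩

lemma induced_mono (X : SComplex V) {U U' : Set V} (h : U ⊆ U') :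
    X.induced U ⊆ X.induced U' :=
  fun _ hσ => ⟨hσ.1, hσ.2.trans h⟩

lemma downClosed_induced (X : SComplex V) (U : Set V) : DownClosed (X.induced U) :=
  (X.inducedSub U).down_closed

lemma induced_inter_induced_of_disjoint (X : SComplex V) {U W : Set V} (h : Disjoint U W) :
    X.induced U ∩ X.induced W = ∅ := by
  refine Set.eq_empty_of_forall_notMem fun σ ⟨hU, hW⟩ => ?_
  obtain ⟨x, hx⟩ := X.nonempty_of_mem hU.1
  exact Set.disjoint_left.mp h (hU.2 hx) (hW.2 hx)

lemma mem_induced_of_subset (X : SComplex V) {W σ : Finset V} (hW : W.Nonempty → W ∈ X.faces)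
    (hσW : σ ⊆ W) (hσ : σ.Nonempty) : σ ∈ X.induced (W : Set V) :=
  ⟨X.down_closed (hW (hσ.mono hσW)) hσW hσ, Finset.coe_subset.mpr hσW⟩

lemma inter_induced_eq_of_inter_induced_union_eq (X : SComplex V) {U W : Set V}
    (hUW : Disjoint U W) {L A B : Set (Finset V)} (hA : A ⊆ X.induced U)
    (hB : B ⊆ X.induced W) (h : L ∩ X.induced (U ∪ W) = A ∪ B) :
    L ∩ X.induced U = A := by
  have hBU : B ∩ X.induced U = ∅ :=
    Set.subset_empty_iff.mp <| (Set.inter_subset_inter_left _ hB).trans_eq <|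
      X.induced_inter_induced_of_disjoint hUW.symm
  calc L ∩ X.induced U = L ∩ X.induced (U ∪ W) ∩ X.induced U := by
        rw [Set.inter_assoc, Set.inter_eq_right.mpr (X.induced_mono Set.subset_union_left)]
    _ = A := by rw [h, Set.union_inter_distrib_right, hBU, Set.union_empty,
        Set.inter_eq_left.mpr hA]

variable [DecidableEq V]

/-- `v` is a witness for the pair `(U, A)` in the sense of `Ample`. -/
def Realizes (X : SComplex V) (U : Finset V) (A : Set (Finset V)) (v : V) : Prop :=
  v ∈ X.verts ∧ v ∉ U ∧ X.link v ∩ X.induced (U : Set V) = A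

lemma Realizes.of_union {X : SComplex V} {U W : Finset V} {A B : Set (Finset V)} {v : V}
    (h : X.Realizes (U ∪ W) (A ∪ B) v) (hUW : Disjoint U W) (hA : A ⊆ X.induced (U : Set V))
    (hB : B ⊆ X.induced (W : Set V)) : X.Realizes U A v := by
  refine ⟨h.1, fun hu => h.2.1 (Finset.mem_union_left _ hu), ?_⟩
  refine X.inter_induced_eq_of_inter_induced_union_eq (Finset.disjoint_coe.mpr hUW) hA hB ?_
  rw [← Finset.coe_union]
  exact h.2.2

lemma ample_of_forall_exists_realizes {X : SComplex V} {s : ℕ}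
    (h : ∀ U : Finset V, (U : Set V) ⊆ X.verts → U.card ≤ s →
      ∀ A ⊆ X.induced (U : Set V), DownClosed A → ∃ v, X.Realizes U A v) :
    X.Ample s := by
  obtain ⟨v, hv, -⟩ := h ∅ (by simp) (by simp) ∅ (Set.empty_subset _) (by simp [DownClosed])
  exact ⟨⟨{v}, hv⟩, h⟩

namespace Ample

variable {X : SComplex V} {r : ℕ} (hX : X.Ample r) {U : Finset V} {A : Set (Finset V)}
  (hU : (U : Set V) ⊆ X.verts) (hA : A ⊆ X.induced (U : Set V)) (hAd : DownClosed A)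
include hX hU hA hAd

lemma exists_realizes_union {W : Finset V} (hW : (W : Set V) ⊆ X.verts)
    (hcard : U.card + W.card ≤ r) {B : Set (Finset V)} (hB : B ⊆ X.induced (W : Set V))
    (hBd : DownClosed B) : ∃ v, X.Realizes (U ∪ W) (A ∪ B) v := by
  refine hX.2 (U ∪ W) ?_ ((Finset.card_union_le U W).trans hcard) (A ∪ B) ?_ (hAd.union hBd)
  · rw [Finset.coe_union]
    exact Set.union_subset hU hW
  · rw [Finset.coe_union]
    exact Set.union_subset (hA.trans (X.induced_mono Set.subset_union_left))
      (hB.trans (X.induced_mono Set.subset_union_right))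

/-- Each new vertex is asked to be a cone over the simplex built so far. -/
lemma exists_simplex_of_realizes {k : ℕ} (hk : U.card + k ≤ r) :
    ∃ W : Finset V, W.card = k ∧ (W.Nonempty → W ∈ X.faces) ∧ ∀ w ∈ W, X.Realizes U A w := by
  induction k with
  | zero => exact ⟨∅, rfl, fun h => absurd h Finset.not_nonempty_empty, by simp⟩
  | succ k ih =>
    obtain ⟨W, hWc, hWf, hWr⟩ := ih (by omega)
    have hWU : Disjoint U W := Finset.disjoint_right.mpr fun w hw => (hWr w hw).2.1
    obtain ⟨v, hv⟩ := exists_realizes_union hX hU hA hAd (fun w hw => (hWr w hw).1)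
      (by omega) (fun σ hσ => X.mem_induced_of_subset hWf hσ.2 hσ.1)
      (downClosed_nonempty_subsets W)
    have hvW : v ∉ W := fun h => hv.2.1 (Finset.mem_union_right _ h)
    refine ⟨insert v W, by rw [Finset.card_insert_of_notMem hvW, hWc], fun _ => ?_, ?_⟩
    · rcases W.eq_empty_or_nonempty with rfl | hne
      · exact hv.1
      · have hWlink : W ∈ X.link v ∩ X.induced ((U ∪ W : Finset V) : Set V) :=
          hv.2.2 ▸ Or.inr ⟨hne, subset_rfl⟩
        exact hWlink.1.2.2
    · rintro w hw
      rcases Finset.mem_insert.mp hw with rfl | hw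
      · exact hv.of_union hWU hA fun σ hσ => X.mem_induced_of_subset hWf hσ.2 hσ.1
      · exact hWr w hw

lemma le_encard_realizes {k : ℕ} (hk : U.card + k ≤ r) :
    (Mprime k + k : ℕ∞) ≤ {v | X.Realizes U A v}.encard := by
  obtain ⟨W, hWc, hWf, hWr⟩ := exists_simplex_of_realizes hX hU hA hAd hk
  have hWU : Disjoint U W := Finset.disjoint_right.mpr fun w hw => (hWr w hw).2.1
  let e : Fin k ↪ V := (Finset.equivFinOfCardEq hWc).symm.toEmbedding.trans
    (Function.Embedding.subtype _)
  have he : ∀ σ : Finset (Fin k), σ.map e ⊆ W := fun σ x hx => by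
    obtain ⟨i, -, rfl⟩ := Finset.mem_map.mp hx
    exact ((Finset.equivFinOfCardEq hWc).symm i).2
  let Cx := {B : Set (Finset (Fin k)) // (∀ σ ∈ B, σ.Nonempty) ∧ DownClosed B}
  let push : Cx → Set (Finset V) := fun B => Finset.map e '' B.1
  have hpush : ∀ B, push B ⊆ X.induced (W : Set V) := by
    rintro B _ ⟨σ, hσ, rfl⟩
    exact X.mem_induced_of_subset hWf (he σ) ((B.2.1 σ hσ).map)
  have hpush_inj : Function.Injective push :=
    (Set.image_injective.mpr (Finset.map_injective e)).comp Subtype.val_injective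
  choose c hc using fun B : Cx => exists_realizes_union hX hU hA hAd
    (fun w hw => (hWr w hw).1) (by omega) (hpush B) (B.2.2.image_map e)
  have hlink : ∀ B, X.link (c B) ∩ X.induced (W : Set V) = push B := fun B => by
    refine X.inter_induced_eq_of_inter_induced_union_eq (Finset.disjoint_coe.mpr hWU.symm)
      (hpush B) hA ?_
    rw [Set.union_comm, Set.union_comm (push B), ← Finset.coe_union]
    exact (hc B).2.2
  have hc_inj : Function.Injective c := fun B₀ B₁ h =>
    hpush_inj ((hlink B₀).symm.trans (h ▸ hlink B₁))
  have hdisj : Disjoint (W : Set V) (Set.range c) := Set.disjoint_right.mpr <| by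
    rintro _ ⟨B, rfl⟩ hB
    exact (hc B).2.1 (Finset.mem_union_right _ hB)
  have hsub : (W : Set V) ∪ Set.range c ⊆ {v | X.Realizes U A v} := by
    rintro _ (hw | ⟨B, rfl⟩)
    · exact hWr _ hw
    · exact (hc B).of_union hWU hA (hpush B)
  calc (Mprime k + k : ℕ∞) = ENat.card Cx + (W : Set V).encard := by
        rw [Set.encard_coe_eq_coe_finsetCard, hWc, Mprime, ENat.card_eq_coe_natCard]
    _ ≤ (Set.range c).encard + (W : Set V).encard := by gcongr; exact hc_inj.encard_range
    _ = ((W : Set V) ∪ Set.range c).encard := by rw [add_comm, Set.encard_union_eq hdisj]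
    _ ≤ _ := Set.encard_le_encard hsub

end Ample

lemma Realizes.remove {X : SComplex V} {U : Finset V} {A : Set (Finset V)} {v : V}
    (h : X.Realizes U A v) {𝓕 : Set (Finset V)} (h𝓕 : ∀ τ ∈ 𝓕, τ.Nonempty)
    (hv : v ∉ vertsOf 𝓕) (hA : A ⊆ (X.remove 𝓕).induced (U : Set V)) :
    (X.remove 𝓕).Realizes U A v := by
  have hv𝓕 : ∀ τ ∈ 𝓕, v ∉ τ := fun τ hτ hvτ => hv (Set.mem_biUnion hτ hvτ)
  refine ⟨⟨h.1, fun τ hτ hsub => ?_⟩, h.2.1, Set.Subset.antisymm ?_ fun σ hσ => ⟨?_, hA hσ⟩⟩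
  · obtain ⟨x, hx⟩ := h𝓕 τ hτ
    exact hv𝓕 τ hτ (Finset.mem_singleton.mp (hsub hx) ▸ hx)
  · rw [← h.2.2]
    exact fun σ ⟨⟨hσ, hvσ, hins⟩, hind⟩ => ⟨⟨hσ.1, hvσ, hins.1⟩, hind.1.1, hind.2⟩
  · have hσX : σ ∈ X.link v := (h.2.2.symm ▸ hσ : σ ∈ X.link v ∩ _).1
    refine ⟨(hA hσ).1, hσX.2.1, hσX.2.2, fun τ hτ hsub => (hA hσ).1.2 τ hτ ?_⟩
    exact fun x hx => (Finset.mem_insert.mp (hsub hx)).resolve_left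
      fun hxv => hv𝓕 τ hτ (hxv ▸ hx)

theorem Ample.remove {X : SComplex V} {r s : ℕ} (hX : X.Ample r) (hs : s ≤ r)
    {𝓕 : Set (Finset V)} (h𝓕 : ∀ τ ∈ 𝓕, τ.Nonempty)
    (hsize : (vertsOf 𝓕).encard < Mprime (r - s) + (r - s)) : (X.remove 𝓕).Ample s := by
  refine ample_of_forall_exists_realizes fun U hU hUs A hA hAd => ?_
  have hAX : A ⊆ X.induced (U : Set V) := fun σ hσ => ⟨(hA hσ).1.1, (hA hσ).2⟩
  have hmany := hX.le_encard_realizes (fun x hx => (hU hx).1) hAX hAd (k := r - s) (by omega)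
  obtain ⟨v, hv, hv𝓕⟩ : ∃ v, X.Realizes U A v ∧ v ∉ vertsOf 𝓕 := by
    by_contra! hcon
    exact (hsize.trans_le hmany).not_ge (Set.encard_le_encard hcon)
  exact ⟨v, hv.remove h𝓕 hv𝓕 hA⟩

lemma encard_vertsOf_le {S : Set (Finset V)} (hS : S.Finite) {m : ℕ}
    (h : ∀ σ ∈ S, σ.card ≤ m) : (vertsOf S).encard ≤ S.ncard * m := by
  lift S to Finset (Finset V) using hS
  have hverts : vertsOf (S : Set (Finset V)) = (S.biUnion id : Finset V) := by
    ext; simp [vertsOf]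
  rw [hverts, Set.encard_coe_eq_coe_finsetCard, Set.ncard_coe_finset]
  exact_mod_cast Finset.card_biUnion_le_card_mul S id m h

lemma encard_vertsOf_le_of_card_eq_one_or_two {S : Set (Finset V)} (hS : S.Finite)
    (h : ∀ σ ∈ S, σ.card = 1 ∨ σ.card = 2) :
    (vertsOf S).encard ≤ {σ ∈ S | σ.card = 1}.ncard + 2 * {σ ∈ S | σ.card = 2}.ncard := by
  have hsplit : S = {σ ∈ S | σ.card = 1} ∪ {σ ∈ S | σ.card = 2} := by
    ext σ
    constructor
    · exact fun hσ => (h σ hσ).imp (⟨hσ, ·⟩) (⟨hσ, ·⟩)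
    · rintro (hσ | hσ) <;> exact hσ.1
  have h₁ := encard_vertsOf_le (hS.sep _) (m := 1) fun σ (hσ : σ ∈ S ∧ σ.card = 1) => hσ.2.le
  have h₂ := encard_vertsOf_le (hS.sep _) (m := 2) fun σ (hσ : σ ∈ S ∧ σ.card = 2) => hσ.2.le
  have hverts : vertsOf S = vertsOf {σ ∈ S | σ.card = 1} ∪ vertsOf {σ ∈ S | σ.card = 2} := by
    conv_lhs => rw [hsplit]
    exact Set.biUnion_union _ _ _
  rw [hverts]
  refine (Set.encard_union_le _ _).trans ?_
  push_cast at h₁ h₂ ⊢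
  calc _ ≤ ({σ ∈ S | σ.card = 1}.ncard * 1 : ℕ∞) + {σ ∈ S | σ.card = 2}.ncard * 2 :=
        add_le_add h₁ h₂
    _ = _ := by ring

lemma skeletonGraph_adj_of_singleton_mem_link {Y : SComplex V} {u v : V}
    (h : {u} ∈ Y.link v) : Y.skeletonGraph.Adj v u :=
  ⟨fun hvu => h.2.1 (Finset.mem_singleton.mpr hvu), h.2.2⟩

/-- A witness for `U = {u, w}` and `A = Y_U` is a common neighbour of `u` and `w`. -/
theorem Ample.connected_skeletonGraph {Y : SComplex V} (hY : Y.Ample 2) :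
    (Y.skeletonGraph.induce Y.verts).Connected := by
  obtain ⟨v, hv, -⟩ : ∃ v, Y.Realizes ∅ ∅ v :=
    hY.2 ∅ (by simp) (by simp) ∅ (Set.empty_subset _) (by simp [DownClosed])
  have : Nonempty Y.verts := ⟨⟨v, hv⟩⟩
  refine ⟨fun ⟨u, hu⟩ ⟨w, hw⟩ => ?_⟩
  have hUY : (({u, w} : Finset V) : Set V) ⊆ Y.verts := by
    simpa [Set.insert_subset_iff] using ⟨hu, hw⟩
  obtain ⟨c, hc, -, hlink⟩ : ∃ c, Y.Realizes {u, w} (Y.induced ({u, w} : Finset V)) c :=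
    hY.2 _ hUY Finset.card_le_two _ subset_rfl (Y.downClosed_induced _)
  have hmem : ∀ x ∈ ({u, w} : Finset V), x ∈ Y.verts → {x} ∈ Y.link c := fun x hx hxY => by
    have hx' : {x} ∈ Y.link c ∩ Y.induced ({u, w} : Finset V) := by
      rw [hlink]
      exact ⟨hxY, by simpa using hx⟩
    exact hx'.1
  have hcu : (Y.skeletonGraph.induce Y.verts).Adj ⟨c, hc⟩ ⟨u, hu⟩ :=
    skeletonGraph_adj_of_singleton_mem_link (hmem u (by simp) hu)
  have hcw : (Y.skeletonGraph.induce Y.verts).Adj ⟨c, hc⟩ ⟨w, hw⟩ :=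
    skeletonGraph_adj_of_singleton_mem_link (hmem w (by simp) hw)
  exact hcu.reachable.symm.trans hcw.reachable

end SComplex

open SComplex in
/-- removing `a₀` vertexes and `a₁` edges from an `r`-ample complex
(`r ≥ 3`) with `a₀ + 2a₁ < M'(r-2) + r - 2` yields a `2`-ample complex, whose
1-skeleton is in particular connected. -/
theorem stmt7 {V : Type*} [DecidableEq V] (X : SComplex V) (r : ℕ) (hr : 3 ≤ r)
    (hX : X.Ample r) (𝓕 : Set (Finset V)) (h𝓕 : 𝓕 ⊆ X.faces) (hfin : 𝓕.Finite)
    (hcards : ∀ σ ∈ 𝓕, σ.card = 1 ∨ σ.card = 2)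
    (a₀ a₁ : ℕ)
    (ha₀ : a₀ = {σ ∈ 𝓕 | σ.card = 1}.ncard)
    (ha₁ : a₁ = {σ ∈ 𝓕 | σ.card = 2}.ncard)
    (hsize : a₀ + 2 * a₁ < Mprime (r - 2) + (r - 2)) :
    (X.remove 𝓕).Ample 2 ∧
      (((X.remove 𝓕).skeletonGraph).induce (X.remove 𝓕).verts).Connected := by
  have hverts : (vertsOf 𝓕).encard < Mprime (r - 2) + (r - 2) := by
    refine (encard_vertsOf_le_of_card_eq_one_or_two hfin hcards).trans_lt ?_
    rw [← ha₀, ← ha₁]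
    exact_mod_cast hsize
  have hY := hX.remove (by omega) (fun τ hτ => X.nonempty_of_mem (h𝓕 hτ)) hverts
  exact ⟨hY, hY.connected_skeletonGraph⟩
end

section
/- Every r-ample simplicial complex is r-conic: if X is r-ample, then every subcomplex L of X with at most r vertexes is contained in the closed star St_X(v) of some vertex v of X. -/
namespace SComplex

variable {V : Type*}

theorem vertsOf_subset_verts {X : SComplex V} {L : Set (Finset V)} (hL : L ⊆ X.faces)
    (hLdc : DownClosed L) : vertsOf L ⊆ X.verts :=
  Set.iUnion₂_subset fun _ hσ v hv =>
    hL (hLdc hσ (Finset.singleton_subset_iff.mpr hv) (Finset.singleton_nonempty v))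

theorem subset_induced_vertsOf {X : SComplex V} {L : Set (Finset V)} (hL : L ⊆ X.faces) :
    L ⊆ X.induced (vertsOf L) :=
  fun _ hσ => ⟨hL hσ, Set.subset_biUnion_of_mem (u := fun τ : Finset V => (τ : Set V)) hσ⟩

theorem Ample.exists_forall_insert_mem_faces [DecidableEq V] {X : SComplex V} {r : ℕ}
    (hX : X.Ample r) {U : Finset V} (hU : (U : Set V) ⊆ X.verts) (hUr : U.card ≤ r)
    {L : Set (Finset V)} (hLU : L ⊆ X.induced U) (hLdc : DownClosed L) :
    ∃ v ∈ X.verts, ∀ σ ∈ L, insert v σ ∈ X.faces := by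
  obtain ⟨v, hv, -, hlink⟩ := hX.2 U hU hUr L hLU hLdc
  refine ⟨v, hv, fun σ hσ => ?_⟩
  rw [← hlink] at hσ
  exact hσ.1.2.2

end SComplex

open SComplex in
theorem stmt8_general {V : Type*} [DecidableEq V] (X : SComplex V) (r : ℕ)
    (hX : X.Ample r) : X.Conic r := by
  refine ⟨hX.1, fun L hL hLdc hfin hcard => ?_⟩
  have hU : (hfin.toFinset : Set V) = vertsOf L := hfin.coe_toFinset
  refine hX.exists_forall_insert_mem_faces (U := hfin.toFinset) ?_ ?_ ?_ hLdc
  · rw [hU]; exact vertsOf_subset_verts hL hLdc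
  · rwa [← Set.ncard_coe_finset, hU]
  · rw [hU]; exact subset_induced_vertsOf hL

open SComplex in
/-- every `r`-ample complex is `r`-conic. -/
theorem stmt8 {V : Type*} [DecidableEq V] (X : SComplex V) (r : ℕ) (hr : 1 ≤ r)
    (hX : X.Ample r) : X.Conic r :=
  stmt8_general X r hX
end

section
/- Let K be an r-conic simplicial complex, let t ≥ 1 be an integer, and let v₁, v₂, …, v_t be vertexes of K. Then the intersection S = ⋂_{i=1}^t St_K(v_i) of their closed stars is an (r−t)-conic simplicial complex. In particular, if t ≤ r then S is nonempty. -/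
namespace SComplex

variable {V : Type*}

lemma vertsOf_induced_subset (K : SComplex V) (U : Set V) : vertsOf (K.induced U) ⊆ U :=
  Set.iUnion₂_subset fun _ hσ => hσ.2

lemma ncard_range_le {t : ℕ} (v : Fin t → V) : (Set.range v).ncard ≤ t := by
  simpa [Set.image_univ] using Set.ncard_image_le (f := v) (Set.finite_univ (α := Fin t))

variable [DecidableEq V] {K : SComplex V} {r : ℕ}

lemma Conic.exists_cone_induced (hK : K.Conic r) {U : Set V} (hU : U.Finite)
    (hUr : U.ncard ≤ r) : ∃ w ∈ K.verts, ∀ τ ∈ K.induced U, insert w τ ∈ K.faces :=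
  hK.2 _ (fun _ hτ => hτ.1) (K.inducedSub U).down_closed
    (hU.subset (K.vertsOf_induced_subset U))
    ((Set.ncard_le_ncard (K.vertsOf_induced_subset U) hU).trans hUr)

/-- Coning off the subcomplex of `K` induced on `V(L) ∪ {v₁, …, vₜ}` cones off `L` inside
the intersection of the stars. -/
lemma Conic.exists_cone_starsInter (hK : K.Conic r) {t : ℕ} {v : Fin t → V}
    (hv : ∀ i, v i ∈ K.verts) {L : Set (Finset V)} (hL : L ⊆ (K.starsInter v).faces)
    (hLfin : (vertsOf L).Finite) (hLr : (vertsOf L).ncard + t ≤ r) :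
    ∃ w ∈ (K.starsInter v).verts, ∀ σ ∈ L, insert w σ ∈ (K.starsInter v).faces := by
  set E := vertsOf L ∪ Set.range v
  have hE : E.ncard ≤ r :=
    (Set.ncard_union_le _ _).trans ((Nat.add_le_add_left (ncard_range_le v) _).trans hLr)
  obtain ⟨w, hw, hcone⟩ := hK.exists_cone_induced (hLfin.union (Set.finite_range v)) hE
  have hvE : ∀ i, v i ∈ E := fun i => Or.inr ⟨i, rfl⟩
  have hLE : ∀ σ ∈ L, (σ : Set V) ⊆ E := fun σ hσ =>
    (Set.subset_biUnion_of_mem (u := fun τ : Finset V => (τ : Set V)) hσ).trans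
      Set.subset_union_left
  refine ⟨w, ⟨hw, fun i => ?_⟩, fun σ hσ => ⟨hcone σ ⟨(hL hσ).1, hLE σ hσ⟩, fun i => ?_⟩⟩
  · rw [Finset.pair_comm]
    exact hcone {v i} ⟨hv i, by rw [Finset.coe_singleton, Set.singleton_subset_iff]; exact hvE i⟩
  · rw [Finset.insert_comm]
    refine hcone _ ⟨(hL hσ).2 i, ?_⟩
    rw [Finset.coe_insert]
    exact Set.insert_subset (hvE i) (hLE σ hσ)

lemma Conic.starsInter (hK : K.Conic r) {t : ℕ} {v : Fin t → V} (hv : ∀ i, v i ∈ K.verts)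
    (htr : t ≤ r) : (K.starsInter v).Conic (r - t) := by
  refine ⟨?_, fun L hL _ hLfin hLr => hK.exists_cone_starsInter hv hL hLfin (by omega)⟩
  obtain ⟨w, hw, -⟩ := hK.exists_cone_starsInter hv (L := ∅) (Set.empty_subset _)
    (by simp [vertsOf]) (by simpa [vertsOf] using htr)
  exact ⟨{w}, hw⟩

end SComplex

open SComplex in
theorem stmt9_general {V : Type*} [DecidableEq V] (K : SComplex V) (r t : ℕ)
    (hK : K.Conic r) (v : Fin t → V) (hv : ∀ i, v i ∈ K.verts) :
    (t ≤ r → (K.starsInter v).Conic (r - t)) ∧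
      (t ≤ r → (K.starsInter v).faces.Nonempty) :=
  ⟨hK.starsInter hv, fun htr => (hK.starsInter hv htr).1⟩

open SComplex in
/-- in an `r`-conic complex, the intersection of the closed stars of `t`
vertexes is `(r-t)`-conic; in particular it is nonempty when `t ≤ r`. -/
theorem stmt9 {V : Type*} [DecidableEq V] (K : SComplex V) (r t : ℕ) (ht : 1 ≤ t)
    (hK : K.Conic r) (v : Fin t → V) (hv : ∀ i, v i ∈ K.verts) :
    (t ≤ r → (K.starsInter v).Conic (r - t)) ∧
      (t ≤ r → (K.starsInter v).faces.Nonempty) :=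
  stmt9_general K r t hK v hv
end

section
/- Any two ∞-ample simplicial complexes with countably infinite vertex sets are isomorphic as simplicial complexes. -/
/-!
Back and forth. Suppose a finite partial isomorphism `R` between `X` and `Y` is given and `x`
is a vertex of `X` outside its domain. Transport the part of `X` lying in the link of `x`
(restricted to the domain of `R`) along `R`; this gives a subcomplex `A` of `Y`, induced on the
range of `R`. Ampleness of `Y` produces a vertex `y` whose link meets that range in exactly `A`,
and then `R ∪ {(x, y)}` is again a partial isomorphism. The same argument with `X` and `Y`
swapped extends the range. Enumerate both countable vertex sets and alternate the two kinds of
extension (the Rasiowa–Sikorski lemma). The union of the resulting chain is the graph of an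
isomorphism.
-/

namespace SComplex

variable {V W : Type*} [DecidableEq V] [DecidableEq W] {X : SComplex V} {Y : SComplex W}

/-- Recorded as a set of pairs, not as a map, so that the notion is symmetric in `X` and `Y`. -/
structure IsPartialIso (X : SComplex V) (Y : SComplex W) (R : Set (V × W)) : Prop where
  fst_mem_verts : ∀ p ∈ R, p.1 ∈ X.verts
  fst_eq_iff : ∀ p ∈ R, ∀ q ∈ R, p.1 = q.1 ↔ p.2 = q.2
  image_fst_mem_iff : ∀ S : Finset (V × W), (S : Set (V × W)) ⊆ R →
    (S.image Prod.fst ∈ X.faces ↔ S.image Prod.snd ∈ Y.faces)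

namespace IsPartialIso

variable {R : Set (V × W)}

theorem snd_mem_verts (hR : IsPartialIso X Y R) {p : V × W} (hp : p ∈ R) : p.2 ∈ Y.verts := by
  have h := (hR.image_fst_mem_iff {p} (by simpa)).1
    (by rw [Finset.image_singleton]; exact hR.fst_mem_verts p hp)
  rwa [Finset.image_singleton] at h

theorem swap (hR : IsPartialIso X Y R) : IsPartialIso Y X (Prod.swap ⁻¹' R) where
  fst_mem_verts _ hp := hR.snd_mem_verts hp
  fst_eq_iff p hp q hq := (hR.fst_eq_iff _ hp _ hq).symm
  image_fst_mem_iff S hS := by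
    have hSR : ((S.image Prod.swap : Finset (V × W)) : Set (V × W)) ⊆ R := by
      simpa [Set.image_subset_iff] using hS
    simpa [Finset.image_image, Function.comp_def] using (hR.image_fst_mem_iff _ hSR).symm

theorem empty : IsPartialIso X Y ∅ where
  fst_mem_verts := by simp
  fst_eq_iff := by simp
  image_fst_mem_iff S hS := by
    obtain rfl : S = ∅ := by simpa using hS
    exact iff_of_false (fun h => by simpa using X.nonempty_of_mem h)
      (fun h => by simpa using Y.nonempty_of_mem h)

theorem iUnion {ι : Type*} [Nonempty ι] {R : ι → Set (V × W)} (hdir : Directed (· ⊆ ·) R)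
    (hR : ∀ i, IsPartialIso X Y (R i)) : IsPartialIso X Y (⋃ i, R i) where
  fst_mem_verts p hp := by
    obtain ⟨i, hi⟩ := Set.mem_iUnion.1 hp
    exact (hR i).fst_mem_verts p hi
  fst_eq_iff p hp q hq := by
    obtain ⟨i, hi⟩ := Set.mem_iUnion.1 hp
    obtain ⟨j, hj⟩ := Set.mem_iUnion.1 hq
    obtain ⟨k, hik, hjk⟩ := hdir i j
    exact (hR k).fst_eq_iff p (hik hi) q (hjk hj)
  image_fst_mem_iff S hS := by
    obtain ⟨i, hi⟩ := hdir.exists_mem_subset_of_finset_subset_biUnion hS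
    exact (hR i).image_fst_mem_iff S hi

theorem exists_isIso [Nonempty W] (hR : IsPartialIso X Y R)
    (hfst : X.verts ⊆ Prod.fst '' R) (hsnd : Y.verts ⊆ Prod.snd '' R) :
    ∃ f : V → W, IsIso f X Y := by
  classical
  let f : V → W := fun v => if h : ∃ w, (v, w) ∈ R then h.choose else Classical.arbitrary W
  have hf : ∀ v ∈ X.verts, (v, f v) ∈ R := by
    intro v hv
    obtain ⟨⟨v', w⟩, hw, rfl⟩ := hfst hv
    have h : ∃ w, (v', w) ∈ R := ⟨w, hw⟩
    simpa [f, h] using h.choose_spec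
  refine ⟨f, ⟨fun v hv => hR.snd_mem_verts (hf v hv), fun v hv v' hv' h => ?_, fun w hw => ?_⟩,
    fun σ hσ => ?_⟩
  · exact (hR.fst_eq_iff _ (hf v hv) _ (hf v' hv')).2 h
  · obtain ⟨⟨v, _⟩, hvw, rfl⟩ := hsnd hw
    have hv := hR.fst_mem_verts _ hvw
    exact ⟨v, hv, (hR.fst_eq_iff _ (hf v hv) _ hvw).1 rfl⟩
  · have hS : ((σ.image fun v => (v, f v) : Finset (V × W)) : Set (V × W)) ⊆ R := by
      simpa [Set.subset_def] using fun v hv => hf v (hσ hv)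
    simpa [Finset.image_image, Function.comp_def] using hR.image_fst_mem_iff _ hS

variable {R : Finset (V × W)}

theorem filter_snd_mem_image_snd (hR : IsPartialIso X Y ↑R) {S : Finset (V × W)} (hS : S ⊆ R) :
    R.filter (fun p => p.2 ∈ S.image Prod.snd) = S := by
  ext p
  simp only [Finset.mem_filter, Finset.mem_image]
  constructor
  · rintro ⟨hp, q, hq, hqp⟩
    have hpq : p.1 = q.1 := (hR.fst_eq_iff p hp q (hS hq)).2 hqp.symm
    rwa [Prod.ext hpq hqp.symm]
  · exact fun hp => ⟨hS hp, p, hp, rfl⟩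

theorem insert_of_link_iff (hR : IsPartialIso X Y ↑R) {x : V} {y : W} (hx : x ∈ X.verts)
    (hy : y ∈ Y.verts) (hxR : x ∉ R.image Prod.fst) (hyR : y ∉ R.image Prod.snd)
    (hxy : ∀ S ⊆ R, S.Nonempty →
      (insert x (S.image Prod.fst) ∈ X.faces ↔ insert y (S.image Prod.snd) ∈ Y.faces)) :
    IsPartialIso X Y ↑(insert (x, y) R) where
  fst_mem_verts p hp := by
    rcases Finset.mem_insert.1 hp with rfl | hp
    · exact hx
    · exact hR.fst_mem_verts p hp
  fst_eq_iff p hp q hq := by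
    have hne : ∀ q ∈ R, x ≠ q.1 ∧ y ≠ q.2 := fun q hq =>
      ⟨fun h => hxR (h ▸ Finset.mem_image_of_mem _ hq),
        fun h => hyR (h ▸ Finset.mem_image_of_mem _ hq)⟩
    rcases Finset.mem_insert.1 hp with rfl | hp <;> rcases Finset.mem_insert.1 hq with rfl | hq
    · simp
    · exact iff_of_false (hne q hq).1 (hne q hq).2
    · exact iff_of_false (hne p hp).1.symm (hne p hp).2.symm
    · exact hR.fst_eq_iff p hp q hq
  image_fst_mem_iff S hS := by
    have hS' : S.erase (x, y) ⊆ R := fun p hp =>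
      (Finset.mem_insert.1 (hS (Finset.mem_of_mem_erase hp))).resolve_left
        (Finset.ne_of_mem_erase hp)
    by_cases hxyS : (x, y) ∈ S
    · rw [← Finset.insert_erase hxyS, Finset.image_insert, Finset.image_insert]
      rcases (S.erase (x, y)).eq_empty_or_nonempty with h | h
      · rw [h, Finset.image_empty, Finset.image_empty]
        exact iff_of_true hx hy
      · exact hxy _ hS' h
    · rw [← Finset.erase_eq_of_notMem hxyS]
      exact hR.image_fst_mem_iff _ hS'

theorem exists_insert_of_ample {r : ℕ} (hR : IsPartialIso X Y ↑R) (hY : Y.Ample r)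
    (hr : R.card ≤ r) {x : V} (hx : x ∈ X.verts) : ∃ y, IsPartialIso X Y ↑(insert (x, y) R) := by
  by_cases hxR : x ∈ R.image Prod.fst
  · obtain ⟨⟨_, y⟩, hp, rfl⟩ := Finset.mem_image.1 hxR
    exact ⟨y, by rwa [Finset.insert_eq_of_mem hp]⟩
  set U := R.image Prod.snd
  let A : Set (Finset W) := {τ | τ ∈ Y.induced U ∧
    insert x ((R.filter fun p => p.2 ∈ τ).image Prod.fst) ∈ X.faces}
  have hAdc : DownClosed A := fun τ hτ τ' hτ' hne =>
    ⟨(Y.inducedSub U).down_closed hτ.1 hτ' hne, X.down_closed hτ.2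
      (Finset.insert_subset_insert _ (Finset.image_subset_image
        (Finset.monotone_filter_right _ fun _ _ h => hτ' h)))
      (Finset.insert_nonempty _ _)⟩
  have hU : (U : Set W) ⊆ Y.verts := by
    simpa [Set.subset_def, U] using fun w v hp => hR.snd_mem_verts (p := (v, w)) hp
  obtain ⟨y, hy, hyU, hlink⟩ :=
    hY.2 U hU (Finset.card_image_le.trans hr) A (fun _ h => h.1) hAdc
  refine ⟨y, hR.insert_of_link_iff hx hy hxR hyU fun S hS hSne => ?_⟩
  have hSU : ((S.image Prod.snd : Finset W) : Set W) ⊆ U :=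
    Finset.coe_subset.2 (Finset.image_subset_image hS)
  calc insert x (S.image Prod.fst) ∈ X.faces ↔ S.image Prod.snd ∈ A := by
        simp only [A, Set.mem_ofPred_eq, hR.filter_snd_mem_image_snd hS]
        refine ⟨fun h => ⟨⟨?_, hSU⟩, h⟩, fun h => h.2⟩
        exact (hR.image_fst_mem_iff S (Finset.coe_subset.2 hS)).1
          (X.down_closed h (Finset.subset_insert _ _) (hSne.image _))
    _ ↔ S.image Prod.snd ∈ Y.link y ∩ Y.induced U := by rw [hlink]
    _ ↔ insert y (S.image Prod.snd) ∈ Y.faces := by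
        refine ⟨fun h => h.1.2.2, fun h => ?_⟩
        have hSf := Y.down_closed h (Finset.subset_insert _ _) (hSne.image _)
        exact ⟨⟨hSf, fun hyS => hyU (hSU hyS), h⟩, hSf, hSU⟩

theorem exists_insert_of_ample_left {r : ℕ} (hR : IsPartialIso X Y ↑R) (hX : X.Ample r)
    (hr : R.card ≤ r) {y : W} (hy : y ∈ Y.verts) : ∃ x, IsPartialIso X Y ↑(insert (x, y) R) := by
  have hR' : IsPartialIso Y X ↑(R.image Prod.swap) := by
    simpa [Set.image_swap_eq_preimage_swap] using hR.swap
  obtain ⟨x, hx⟩ := hR'.exists_insert_of_ample hX (Finset.card_image_le.trans hr) hy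
  refine ⟨x, ?_⟩
  convert hx.swap using 1
  ext ⟨v, w⟩
  simp [and_comm]

end IsPartialIso

theorem isCofinal_fst_mem (hY : ∀ r : ℕ, 1 ≤ r → Y.Ample r) {x : V} (hx : x ∈ X.verts) :
    IsCofinal {R : {R : Finset (V × W) // IsPartialIso X Y ↑R} | x ∈ R.1.image Prod.fst} := by
  rintro ⟨R, hR⟩
  obtain ⟨y, hxy⟩ :=
    hR.exists_insert_of_ample (hY (R.card + 1) (Nat.le_add_left 1 _)) R.card.le_succ hx
  exact ⟨⟨_, hxy⟩, Finset.mem_image_of_mem Prod.fst (Finset.mem_insert_self (x, y) R),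
    Finset.subset_insert _ _⟩

theorem isCofinal_snd_mem (hX : ∀ r : ℕ, 1 ≤ r → X.Ample r) {y : W} (hy : y ∈ Y.verts) :
    IsCofinal {R : {R : Finset (V × W) // IsPartialIso X Y ↑R} | y ∈ R.1.image Prod.snd} := by
  rintro ⟨R, hR⟩
  obtain ⟨x, hxy⟩ :=
    hR.exists_insert_of_ample_left (hX (R.card + 1) (Nat.le_add_left 1 _)) R.card.le_succ hy
  exact ⟨⟨_, hxy⟩, Finset.mem_image_of_mem Prod.snd (Finset.mem_insert_self (x, y) R),
    Finset.subset_insert _ _⟩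

theorem exists_isPartialIso_of_ample (hXc : X.verts.Countable) (hYc : Y.verts.Countable)
    (hX : ∀ r : ℕ, 1 ≤ r → X.Ample r) (hY : ∀ r : ℕ, 1 ≤ r → Y.Ample r) :
    ∃ R : Set (V × W), IsPartialIso X Y R ∧ X.verts ⊆ Prod.fst '' R ∧ Y.verts ⊆ Prod.snd '' R := by
  have := hXc.to_subtype
  have := hYc.to_subtype
  let _ : Encodable (X.verts ⊕ Y.verts) := Encodable.ofCountable _
  let D : X.verts ⊕ Y.verts → Order.Cofinal {R : Finset (V × W) // IsPartialIso X Y ↑R} :=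
    Sum.elim (fun x => ⟨_, isCofinal_fst_mem hY x.2⟩) (fun y => ⟨_, isCofinal_snd_mem hX y.2⟩)
  let seq := Order.sequenceOfCofinals ⟨∅, by simpa using IsPartialIso.empty⟩ D
  have hmono : Monotone fun n => ((seq n).1 : Set (V × W)) := fun _ _ h =>
    Finset.coe_subset.2 (Order.sequenceOfCofinals.monotone _ D h)
  refine ⟨⋃ n, ((seq n).1 : Set (V × W)),
    IsPartialIso.iUnion hmono.directed_le fun n => (seq n).2, fun x hx => ?_, fun y hy => ?_⟩
  · obtain ⟨p, hp, rfl⟩ := Finset.mem_image.1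
      (Order.sequenceOfCofinals.encode_mem _ D (Sum.inl ⟨x, hx⟩))
    exact ⟨p, Set.mem_iUnion.2 ⟨_, hp⟩, rfl⟩
  · obtain ⟨p, hp, rfl⟩ := Finset.mem_image.1
      (Order.sequenceOfCofinals.encode_mem _ D (Sum.inr ⟨y, hy⟩))
    exact ⟨p, Set.mem_iUnion.2 ⟨_, hp⟩, rfl⟩

end SComplex

open SComplex in
theorem stmt11_general {V W : Type} [DecidableEq V] [DecidableEq W]
    (X : SComplex V) (Y : SComplex W)
    (hXc : X.verts.Countable) (hYc : Y.verts.Countable)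
    (hX : ∀ r : ℕ, 1 ≤ r → X.Ample r) (hY : ∀ r : ℕ, 1 ≤ r → Y.Ample r) :
    ∃ f : V → W, IsIso f X Y := by
  obtain ⟨σ, hσ⟩ := (hY 1 le_rfl).1
  obtain ⟨w, -⟩ := Y.nonempty_of_mem hσ
  have : Nonempty W := ⟨w⟩
  obtain ⟨R, hR, hfst, hsnd⟩ := exists_isPartialIso_of_ample hXc hYc hX hY
  exact hR.exists_isIso hfst hsnd

open SComplex in
/-- any two `∞`-ample complexes with countably infinite vertex sets are
isomorphic. -/
theorem stmt11 {V W : Type} [DecidableEq V] [DecidableEq W]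
    (X : SComplex V) (Y : SComplex W)
    (hXc : X.verts.Countable) (hXi : X.verts.Infinite)
    (hYc : Y.verts.Countable) (hYi : Y.verts.Infinite)
    (hX : ∀ r : ℕ, 1 ≤ r → X.Ample r) (hY : ∀ r : ℕ, 1 ≤ r → Y.Ample r) :
    ∃ f : V → W, IsIso f X Y :=
  stmt11_general X Y hXc hYc hX hY
end

section
/- The Rado complex is universal: if R is an ∞-ample simplicial complex with countably infinite vertex set, then every simplicial complex X with countable vertex set is isomorphic to an induced subcomplex of R. -/
/-!
A forth-only back-and-forth argument. Enumerate the vertexes of `X` and extend, one vertex at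
a time, a partial embedding `f` defined on a finite set `W`. To place a new vertex `w`, apply
ampleness to `U = f(W)` and to the image `A = f(Lk_X(w) ∩ X_W)`: the resulting vertex
`v ∉ U` with `Lk_R(v) ∩ R_U = A` is exactly what makes `w ↦ v` extend `f`. The partial
embeddings agree on their common domains, so they glue to an embedding of `X`, which is an
isomorphism onto the induced subcomplex of `R` on its image.
-/

theorem exists_seq_of_forall_exists_succ {α : Type*} (P : ℕ → α → Prop) (Q : ℕ → α → α → Prop)
    (h₀ : ∃ a, P 0 a) (hsucc : ∀ n a, P n a → ∃ b, P (n + 1) b ∧ Q n a b) :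
    ∃ g : ℕ → α, ∀ n, P n (g n) ∧ Q n (g n) (g (n + 1)) := by
  obtain ⟨a₀, ha₀⟩ := h₀
  choose! next hnextP hnextQ using hsucc
  let g : ℕ → α := fun n => Nat.rec a₀ next n
  have hg : ∀ n, P n (g n) := fun n => by
    induction n with
    | zero => exact ha₀
    | succ n ih => exact hnextP n _ ih
  exact ⟨g, fun n => ⟨hg n, hnextQ n _ (hg n)⟩⟩

theorem exists_eqOn_of_eqOn_succ {α β : Type*} {W : ℕ → Set α} (hW : Monotone W)
    (g : ℕ → α → β) (hg : ∀ n, Set.EqOn (g (n + 1)) (g n) (W n)) :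
    ∃ f : α → β, ∀ n, Set.EqOn f (g n) (W n) := by
  have hstable : ∀ {m n}, m ≤ n → Set.EqOn (g n) (g m) (W m) := by
    intro m n hmn
    induction n, hmn using Nat.le_induction with
    | base => exact Set.eqOn_refl _ _
    | succ n hmn ih => exact ((hg n).mono (hW hmn)).trans ih
  classical
  refine ⟨fun x => g (if h : ∃ n, x ∈ W n then h.choose else 0) x, fun n x hx => ?_⟩
  have h : ∃ n, x ∈ W n := ⟨n, hx⟩
  simp only [dif_pos h]
  calc g h.choose x = g (max n h.choose) x := (hstable (le_max_right _ _) h.choose_spec).symm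
    _ = g n x := hstable (le_max_left _ _) hx

theorem Finset.filter_mem_image_of_injOn {α β : Type*} [DecidableEq β] {f : α → β}
    {W σ : Finset α} (hf : Set.InjOn f W) (hσ : σ ⊆ W) : W.filter (f · ∈ σ.image f) = σ := by
  ext x
  simp only [Finset.mem_filter, Finset.mem_image]
  constructor
  · rintro ⟨hxW, y, hy, hyx⟩
    rwa [← hf (hσ hy) hxW hyx]
  · exact fun hx => ⟨hσ hx, x, hx, rfl⟩

theorem Finset.image_filter_mem_of_subset {α β : Type*} [DecidableEq β] {f : α → β}
    {W : Finset α} {τ : Finset β} (hτ : τ ⊆ W.image f) : (W.filter (f · ∈ τ)).image f = τ := by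
  ext y
  simp only [Finset.mem_image, Finset.mem_filter]
  constructor
  · rintro ⟨x, ⟨-, hx⟩, rfl⟩
    exact hx
  · intro hy
    obtain ⟨x, hx, rfl⟩ := Finset.mem_image.mp (hτ hy)
    exact ⟨x, ⟨hx, hy⟩, rfl⟩

namespace SComplex

variable {VX VR : Type*} {X : SComplex VX} {R : SComplex VR}

theorem verts_inducedSub (S : Set VR) : (R.inducedSub S).verts = R.verts ∩ S := by
  ext u
  simp [verts, inducedSub, induced]

variable [DecidableEq VR]

theorem Ample.exists_insert_mem_faces_iff {r : ℕ} (hR : R.Ample r) {U : Finset VR}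
    (hU : ↑U ⊆ R.verts) (hr : U.card ≤ r) {A : Set (Finset VR)} (hAU : A ⊆ R.induced U)
    (hA : DownClosed A) :
    ∃ v ∈ R.verts, v ∉ U ∧ ∀ τ ⊆ U, τ.Nonempty → (insert v τ ∈ R.faces ↔ τ ∈ A) := by
  obtain ⟨v, hvR, hvU, hlink⟩ := hR.2 U hU hr A hAU hA
  refine ⟨v, hvR, hvU, fun τ hτU hτ => ?_⟩
  rw [← hlink]
  constructor
  · intro hv
    have hτR := R.down_closed hv (Finset.subset_insert _ _) hτ
    exact ⟨⟨hτR, fun hvτ => hvU (hτU hvτ), hv⟩, hτR, Finset.coe_subset.mpr hτU⟩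
  · exact fun h => h.1.2.2

def IsEmbeddingOn (f : VX → VR) (X : SComplex VX) (R : SComplex VR) (W : Finset VX) : Prop :=
  Set.InjOn f W ∧ ∀ σ ⊆ W, (σ ∈ X.faces ↔ σ.image f ∈ R.faces)

theorem isEmbeddingOn_empty (f : VX → VR) : IsEmbeddingOn f X R ∅ := by
  refine ⟨by simp, fun σ hσ => ?_⟩
  rw [Finset.subset_empty.mp hσ, Finset.image_empty]
  exact iff_of_false (fun h => (X.nonempty_of_mem h).ne_empty rfl)
    (fun h => (R.nonempty_of_mem h).ne_empty rfl)

namespace IsEmbeddingOn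

variable {f g : VX → VR} {W W' : Finset VX}

theorem mono (h : IsEmbeddingOn f X R W) (hW : W' ⊆ W) : IsEmbeddingOn f X R W' :=
  ⟨h.1.mono (Finset.coe_subset.mpr hW), fun σ hσ => h.2 σ (hσ.trans hW)⟩

theorem congr (h : IsEmbeddingOn f X R W) (hfg : Set.EqOn f g W) : IsEmbeddingOn g X R W := by
  refine ⟨h.1.congr hfg, fun σ hσ => ?_⟩
  rw [← Finset.image_congr (hfg.mono (Finset.coe_subset.mpr hσ))]
  exact h.2 σ hσ

theorem mem_verts (h : IsEmbeddingOn f X R W) {x : VX} (hxW : x ∈ W) (hx : x ∈ X.verts) :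
    f x ∈ R.verts := by
  have hfx := (h.2 {x} (Finset.singleton_subset_iff.mpr hxW)).mp hx
  rwa [Finset.image_singleton] at hfx

theorem exists_vertex [DecidableEq VX] {r : ℕ} (h : IsEmbeddingOn f X R W) (hR : R.Ample r)
    (hWr : W.card ≤ r) (hW : ↑W ⊆ X.verts) (w : VX) :
    ∃ v ∈ R.verts, v ∉ W.image f ∧
      ∀ σ ⊆ W, σ.Nonempty → (insert w σ ∈ X.faces ↔ insert v (σ.image f) ∈ R.faces) := by
  set U := W.image f
  -- `A` is `f(Lk_X(w) ∩ X_W)`, written through preimages so that it is visibly down-closed.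
  let A : Set (Finset VR) :=
    {τ | τ ⊆ U ∧ τ.Nonempty ∧ insert w (W.filter (f · ∈ τ)) ∈ X.faces}
  have hAU : A ⊆ R.induced U := by
    rintro τ ⟨hτU, hτ, hτX⟩
    have hpre := Finset.image_filter_mem_of_subset hτU
    refine ⟨?_, Finset.coe_subset.mpr hτU⟩
    rw [← hpre]
    refine (h.2 _ (Finset.filter_subset _ _)).mp (X.down_closed hτX (Finset.subset_insert _ _) ?_)
    exact Finset.image_nonempty.mp (hpre ▸ hτ)
  have hA : DownClosed A := by
    rintro τ ⟨hτU, -, hτX⟩ τ' hτ' hτ'ne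
    refine ⟨hτ'.trans hτU, hτ'ne, X.down_closed hτX ?_ (Finset.insert_nonempty _ _)⟩
    exact Finset.insert_subset_insert _ (Finset.monotone_filter_right _ fun _ _ hfx => hτ' hfx)
  have hUR : ↑U ⊆ R.verts := by
    intro y hy
    obtain ⟨x, hx, rfl⟩ := Finset.mem_image.mp hy
    exact h.mem_verts hx (hW hx)
  obtain ⟨v, hvR, hvU, hv⟩ :=
    hR.exists_insert_mem_faces_iff hUR (Finset.card_image_le.trans hWr) hAU hA
  refine ⟨v, hvR, hvU, fun σ hσW hσ => ?_⟩
  have hσU : σ.image f ⊆ U := Finset.image_subset_image hσW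
  rw [hv _ hσU (hσ.image f), Set.mem_ofPred_eq, Finset.filter_mem_image_of_injOn h.1 hσW]
  exact ⟨fun hσX => ⟨hσU, hσ.image f, hσX⟩, fun hσA => hσA.2.2⟩

theorem update_insert [DecidableEq VX] {w : VX} {v : VR} (h : IsEmbeddingOn f X R W)
    (hw : w ∈ X.verts) (hwW : w ∉ W) (hvR : v ∈ R.verts) (hvW : v ∉ W.image f)
    (hv : ∀ σ ⊆ W, σ.Nonempty → (insert w σ ∈ X.faces ↔ insert v (σ.image f) ∈ R.faces)) :
    IsEmbeddingOn (Function.update f w v) X R (insert w W) ∧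
      Set.EqOn (Function.update f w v) f W := by
  have hfg : Set.EqOn (Function.update f w v) f W := fun x hx =>
    Function.update_of_ne (ne_of_mem_of_not_mem hx hwW) v f
  have hW := h.congr hfg.symm
  refine ⟨⟨?_, fun σ hσ => ?_⟩, hfg⟩
  · rw [Finset.coe_insert, Set.injOn_insert (by simpa using hwW), Function.update_self,
      hfg.image_eq]
    exact ⟨hW.1, by simpa using hvW⟩
  · rw [Finset.subset_insert_iff] at hσ
    by_cases hwσ : w ∈ σ
    · rw [← Finset.insert_erase hwσ, Finset.image_insert, Function.update_self,
        Finset.image_congr (hfg.mono (Finset.coe_subset.mpr hσ))]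
      rcases (σ.erase w).eq_empty_or_nonempty with he | hne
      · rw [he, Finset.insert_empty, Finset.image_empty, Finset.insert_empty]
        exact iff_of_true hw hvR
      · exact hv _ hσ hne
    · rw [Finset.erase_eq_of_notMem hwσ] at hσ
      exact hW.2 σ hσ

theorem exists_extension [DecidableEq VX] {r : ℕ} (h : IsEmbeddingOn f X R W)
    (hR : R.Ample r) (hWr : W.card ≤ r) (hW : ↑W ⊆ X.verts) {w : VX} (hw : w ∈ X.verts) :
    ∃ g, IsEmbeddingOn g X R (insert w W) ∧ Set.EqOn g f W := by
  by_cases hwW : w ∈ W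
  · exact ⟨f, by rwa [Finset.insert_eq_of_mem hwW], Set.eqOn_refl _ _⟩
  obtain ⟨v, hvR, hvW, hv⟩ := h.exists_vertex hR hWr hW w
  exact ⟨_, h.update_insert hw hwW hvR hvW hv⟩

end IsEmbeddingOn

theorem isEmbedding_of_forall_isEmbeddingOn {f : VX → VR}
    (h : ∀ W : Finset VX, ↑W ⊆ X.verts → IsEmbeddingOn f X R W) : IsEmbedding f X R := by
  classical
  refine ⟨fun x hx y hy hxy => ?_, fun σ hσ => (h σ hσ).2 σ subset_rfl⟩
  exact (h {x, y} (by simp [Set.insert_subset_iff, hx, hy])).1 (by simp) (by simp) hxy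

theorem exists_isEmbedding_of_ample (hR : ∀ r : ℕ, 1 ≤ r → R.Ample r)
    (hX : X.verts.Countable) : ∃ f : VX → VR, IsEmbedding f X R := by
  classical
  obtain ⟨y, -⟩ := R.nonempty_of_mem (hR 1 le_rfl).1.some_mem
  rcases X.verts.eq_empty_or_nonempty with hXe | hXne
  · refine ⟨fun _ => y, isEmbedding_of_forall_isEmbeddingOn fun W hW => ?_⟩
    rw [hXe, Set.subset_empty_iff, Finset.coe_eq_empty] at hW
    exact hW ▸ isEmbeddingOn_empty _
  obtain ⟨e, he⟩ := hX.exists_eq_range hXne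
  let W : ℕ → Finset VX := fun n => (Finset.range n).image e
  have hWmono : Monotone fun n => (W n : Set VX) := fun _ _ hmn =>
    Finset.coe_subset.mpr (Finset.image_subset_image (Finset.range_subset_range.mpr hmn))
  have hWX : ∀ n, ↑(W n) ⊆ X.verts := fun n => by
    simp only [W, Finset.coe_image, he]
    exact Set.image_subset_range _ _
  obtain ⟨g, hg⟩ := exists_seq_of_forall_exists_succ (fun n g => IsEmbeddingOn g X R (W n))
    (fun n g g' => Set.EqOn g' g (W n)) ⟨_, isEmbeddingOn_empty fun _ => y⟩ fun n g hg => by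
      have hWsucc : W (n + 1) = insert (e n) (W n) := by
        simp only [W, Finset.range_add_one, Finset.image_insert]
      rw [hWsucc]
      exact hg.exists_extension (hR _ (Nat.le_add_left 1 _)) (Nat.le_succ _) (hWX n)
        (he ▸ Set.mem_range_self n)
  obtain ⟨f, hf⟩ := exists_eqOn_of_eqOn_succ hWmono g fun n => (hg n).2
  refine ⟨f, isEmbedding_of_forall_isEmbeddingOn fun V hV => ?_⟩
  have hcover : ↑V ⊆ ⋃ n, (W n : Set VX) := by
    intro x hx
    obtain ⟨k, rfl⟩ := he ▸ hV hx
    exact Set.mem_iUnion.mpr ⟨k + 1, Finset.mem_image_of_mem e (Finset.self_mem_range_succ k)⟩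
  obtain ⟨n, hn⟩ := hWmono.directed_le.exists_mem_subset_of_finset_subset_biUnion hcover
  exact ((hg n).1.mono (Finset.coe_subset.mp hn)).congr ((hf n).mono hn).symm

theorem IsEmbedding.image_verts_subset {f : VX → VR} (h : IsEmbedding f X R) :
    f '' X.verts ⊆ R.verts := by
  rintro _ ⟨x, hx, rfl⟩
  have hfx := (h.2 {x} (by simpa using hx)).mp hx
  rwa [Finset.image_singleton] at hfx

theorem IsEmbedding.isIso_inducedSub_image {f : VX → VR} (h : IsEmbedding f X R) :
    IsIso f X (R.inducedSub (f '' X.verts)) := by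
  refine ⟨?_, fun σ hσ => ?_⟩
  · rw [verts_inducedSub, Set.inter_eq_right.mpr h.image_verts_subset]
    exact h.1.bijOn_image
  · rw [h.2 σ hσ]
    exact (and_iff_left (by simpa using Set.image_mono (f := f) hσ)).symm

end SComplex

open SComplex in
theorem stmt13_general {VR VX : Type} [DecidableEq VR]
    (R : SComplex VR)
    (hR : ∀ r : ℕ, 1 ≤ r → R.Ample r)
    (X : SComplex VX) (hXc : X.verts.Countable) :
    ∃ S : Set VR, S ⊆ R.verts ∧ ∃ f : VX → VR, IsIso f X (R.inducedSub S) := by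
  obtain ⟨f, hf⟩ := exists_isEmbedding_of_ample hR hXc
  exact ⟨f '' X.verts, hf.image_verts_subset, f, hf.isIso_inducedSub_image⟩

open SComplex in
/-- universality of the Rado complex: every simplicial complex with
countable vertex set is isomorphic to an induced subcomplex of an `∞`-ample complex
with countably infinite vertex set. -/
theorem stmt13 {VR VX : Type} [DecidableEq VR]
    (R : SComplex VR) (hRc : R.verts.Countable) (hRi : R.verts.Infinite)
    (hR : ∀ r : ℕ, 1 ≤ r → R.Ample r)
    (X : SComplex VX) (hXc : X.verts.Countable) :
    ∃ S : Set VR, S ⊆ R.verts ∧ ∃ f : VX → VR, IsIso f X (R.inducedSub S) :=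
  stmt13_general R hR X hXc
end
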